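/- arXiv:2008.00374 — 4 statements merged into one kernel-verified Lean document; each statement's English description precedes it below -/
import Mathlib

section
/- In a soft reserve system or a hard reserve system induced by a baseline priority order, for any n ∈ {0, 1, ..., r_u}, every smart reserve matching in M_S^n complies with eligibility requirements, is non-wasteful, respects priorities, and is maximal in beneficiary assignment. -/
open Finset

section ReserveSystem

variable {I C : Type*} [Fintype I] [DecidableEq I] [Fintype C] [DecidableEq C]

/-- Patient `i` is eligible for category `c` (i.e. `i π_c ∅`). Priorities are encoded by
injective score functions `pr c : Option I → ℕ`, where `none` stands for `∅` and a
higher score means a higher priority. -/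
def Elig (pr : C → Option I → ℕ) (c : C) (i : I) : Prop :=
  pr c none < pr c (some i)

instance (pr : C → Option I → ℕ) (c : C) (i : I) : Decidable (Elig pr c i) := by
  unfold Elig; infer_instance

/-- A matching assigns each patient a category or `none`, respecting capacities `r`. -/
def IsMatching (r : C → ℕ) (μ : I → Option C) : Prop :=
  ∀ c : C, (univ.filter (fun i => μ i = some c)).card ≤ r c

/-- `μ` complies with eligibility requirements. -/
def CompliesEligibility (pr : C → Option I → ℕ) (μ : I → Option C) : Prop :=
  ∀ i c, μ i = some c → Elig pr c i

/-- `μ` is non-wasteful. -/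
def NonWasteful (pr : C → Option I → ℕ) (r : C → ℕ) (μ : I → Option C) : Prop :=
  ∀ i c, Elig pr c i → μ i = none →
    (univ.filter (fun j => μ j = some c)).card = r c

/-- `μ` respects priorities. -/
def RespectsPriorities (pr : C → Option I → ℕ) (μ : I → Option C) : Prop :=
  ∀ i i' c, μ i = some c → μ i' = none → pr c (some i') < pr c (some i)

/-- Soft reserves induced by the baseline priority `π`: every patient is eligible for
every category; the unreserved category `u` ranks patients by `π`; every other category
ranks its beneficiaries above non-beneficiaries and within each group by `π`. -/
def BaselineSoft (π : I → ℕ) (Ben : C → Finset I) (u : C)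
    (pr : C → Option I → ℕ) : Prop :=
  (∀ c i, pr c none < pr c (some i)) ∧
  (∀ i j : I, pr u (some j) < pr u (some i) ↔ π j < π i) ∧
  (∀ c, c ≠ u → ∀ i j : I, pr c (some j) < pr c (some i) ↔
      ((i ∈ Ben c ∧ j ∉ Ben c) ∨ ((i ∈ Ben c ↔ j ∈ Ben c) ∧ π j < π i)))

/-- Hard reserves induced by the baseline priority `π`: only beneficiaries are eligible
for a preferential treatment category, and they are ranked by `π`; the unreserved
category `u` ranks all patients by `π` (all eligible). -/
def BaselineHard (π : I → ℕ) (Ben : C → Finset I) (u : C)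
    (pr : C → Option I → ℕ) : Prop :=
  (∀ i, pr u none < pr u (some i)) ∧
  (∀ i j : I, pr u (some j) < pr u (some i) ↔ π j < π i) ∧
  (∀ c, c ≠ u → ∀ i, (i ∈ Ben c ↔ pr c none < pr c (some i))) ∧
  (∀ c, c ≠ u → ∀ i j, i ∈ Ben c → j ∈ Ben c →
      (pr c (some j) < pr c (some i) ↔ π j < π i))

/-- `i` is matched under `μ` to a preferential treatment category she is a beneficiary
of. -/
def BenefMatched (Ben : C → Finset I) (u : C) (μ : I → Option C) (i : I) : Prop :=
  ∃ c, μ i = some c ∧ c ≠ u ∧ i ∈ Ben c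

instance (Ben : C → Finset I) (u : C) (μ : I → Option C) (i : I) :
    Decidable (BenefMatched Ben u μ i) := by
  unfold BenefMatched; infer_instance

/-- Number of patients matched to preferential treatment categories they are
beneficiaries of. -/
def benefCount (Ben : C → Finset I) (u : C) (μ : I → Option C) : ℕ :=
  (univ.filter (fun i => BenefMatched Ben u μ i)).card

/-- `μ` is a matching that is maximal in beneficiary assignment. -/
def MaxBeneficiary (r : C → ℕ) (Ben : C → Finset I) (u : C) (μ : I → Option C) : Prop :=
  IsMatching r μ ∧ ∀ ν : I → Option C, IsMatching r ν →
    benefCount Ben u ν ≤ benefCount Ben u μ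

structure SmartState (I C : Type*) where
  Ju : Finset I
  J : Finset I
  Ms : Set (I → Option C)

attribute [local instance] Classical.propDecidable

/-- Step 1.(k) of the smart reserve matching algorithm, processing patient `i`. -/
noncomputable def smartStep (Ben : C → Finset I) (u : C) (n : ℕ)
    (st : SmartState I C) (i : I) : SmartState I C :=
  if st.Ju.card < n ∧ ∃ μ ∈ st.Ms, μ i = some u then
    ⟨insert i st.Ju, st.J, {μ ∈ st.Ms | μ i = some u}⟩
  else if ∃ μ ∈ st.Ms, BenefMatched Ben u μ i then
    ⟨st.Ju, insert i st.J, {μ ∈ st.Ms | BenefMatched Ben u μ i}⟩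
  else st

/-- Step 1 of the smart reserve matching algorithm: patients are processed one at a time
along the list `L` (which enumerates the patients in decreasing baseline priority),
starting from the set of all matchings that are maximal in beneficiary assignment. -/
noncomputable def smartRun (r : C → ℕ) (Ben : C → Finset I) (u : C) (n : ℕ)
    (L : List I) : SmartState I C :=
  L.foldl (smartStep Ben u n) ⟨∅, ∅, {μ | MaxBeneficiary r Ben u μ}⟩

/-- Assign one unit of category `c` to the highest baseline-priority remaining eligible
patient (if any). -/
noncomputable def fillOne (pr : C → Option I → ℕ) (π : I → ℕ) (c : C)
    (st : (I → Option C) × Finset I) : (I → Option C) × Finset I :=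
  if h : (st.2.filter (fun i => Elig pr c i)).Nonempty then
    (Function.update st.1
        (Classical.choose (Finset.exists_max_image (st.2.filter (fun i => Elig pr c i)) π h))
        (some c),
     st.2.erase
        (Classical.choose (Finset.exists_max_image (st.2.filter (fun i => Elig pr c i)) π h)))
  else st

/-- The set `M_S^n` of smart reserve matchings with parameter `n`: outcomes of Step 1
(processed along the baseline-priority-decreasing enumeration `L` of the patients),
followed by Step 2, which assigns the committed patients as in a chosen matching of the
final candidate set, and then fills the remaining units of the preferential treatment
categories in an arbitrary order `P` followed by the remaining unreserved units, one at
a time to the highest baseline-priority remaining eligible patient. -/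
noncomputable def SmartMatchings (pr : C → Option I → ℕ) (π : I → ℕ) (r : C → ℕ)
    (Ben : C → Finset I) (u : C) (n : ℕ) : Set (I → Option C) :=
  { σ | ∃ L : List I, L.Nodup ∧ (∀ i : I, i ∈ L) ∧ L.Pairwise (fun a b => π b < π a) ∧
      ∃ μ ∈ (smartRun r Ben u n L).Ms,
        ∃ P : List C, u ∉ P ∧
          (∀ c, c ≠ u → P.count c =
            r c - (((smartRun r Ben u n L).J).filter (fun i => μ i = some c)).card) ∧
          σ = ((P ++ List.replicate (r u - (smartRun r Ben u n L).Ju.card) u).foldl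
                (fun st c => fillOne pr π c st)
                (fun i =>
                    if i ∈ (smartRun r Ben u n L).Ju ∪ (smartRun r Ben u n L).J
                    then μ i else none,
                 univ \ ((smartRun r Ben u n L).Ju ∪ (smartRun r Ben u n L).J))).1 }

end ReserveSystem

/-! Step 1 only ever restricts the set of beneficiary-maximal matchings, so any matching `μ`
left at its end is beneficiary-maximal, and a patient passed over in Step 1 is
beneficiary-matched by no maximal matching honouring the commitments made before her.
Exchanging her with a committed patient of lower baseline priority in `μ` would give such a
matching serving her, as a beneficiary or from `u` before all `n` units of `u` reserved for
Step 1 were committed; hence every patient committed to `u`, or to a preferential category she is a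
beneficiary of, has higher baseline priority. Step 2 is a greedy fill by baseline priority,
which gives non-wastefulness and priority among the patients it assigns. It keeps all
commitments of `μ`, so the result is again beneficiary-maximal, and a non-beneficiary
holding a preferential unit while a beneficiary stays unmatched would contradict that. -/

section SmartReserveMatching

variable {I C : Type*} {π : I → ℕ} {Ben : C → Finset I} {u : C} {pr : C → Option I → ℕ}
  {r : C → ℕ} {n : ℕ}

structure BaselineInduced (π : I → ℕ) (Ben : C → Finset I) (u : C)
    (pr : C → Option I → ℕ) : Prop where
  elig_u : ∀ i, Elig pr u i
  pr_u_lt_iff : ∀ i j : I, pr u (some j) < pr u (some i) ↔ π j < π i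
  elig_of_mem : ∀ c, c ≠ u → ∀ i ∈ Ben c, Elig pr c i
  pr_lt : ∀ c, c ≠ u → ∀ i j, Elig pr c i → Elig pr c j →
    (i ∈ Ben c ∧ j ∉ Ben c) ∨ ((i ∈ Ben c ↔ j ∈ Ben c) ∧ π j < π i) →
      pr c (some j) < pr c (some i)

theorem BaselineSoft.baselineInduced (h : BaselineSoft π Ben u pr) :
    BaselineInduced π Ben u pr where
  elig_u i := h.1 u i
  pr_u_lt_iff := h.2.1
  elig_of_mem c _ i _ := h.1 c i
  pr_lt c hc i j _ _ := (h.2.2 c hc i j).2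

theorem BaselineHard.baselineInduced (h : BaselineHard π Ben u pr) :
    BaselineInduced π Ben u pr where
  elig_u := h.1
  pr_u_lt_iff := h.2.1
  elig_of_mem c hc i := (h.2.2.1 c hc i).1
  pr_lt c hc i j hi hj hij := by
    have hiB := (h.2.2.1 c hc i).2 hi
    have hjB := (h.2.2.1 c hc j).2 hj
    rcases hij with ⟨-, hjB'⟩ | ⟨-, hlt⟩
    · exact absurd hjB hjB'
    · exact (h.2.2.2 c hc i j hiB hjB).2 hlt

theorem respectsPriorities_of_elig {σ : I → Option C} (hσ : CompliesEligibility pr σ)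
    (h : ∀ i i' c, σ i = some c → σ i' = none → Elig pr c i' →
      pr c (some i') < pr c (some i)) :
    RespectsPriorities pr σ := by
  intro i i' c hi hi'
  by_cases he : Elig pr c i'
  · exact h i i' c hi hi' he
  · exact (not_lt.1 he).trans_lt (hσ i c hi)

theorem benefMatched_comp_swap_iff [DecidableEq I] {μ : I → Option C} {a b k : I} (hka : k ≠ a)
    (hkb : k ≠ b) :
    BenefMatched Ben u (μ ∘ Equiv.swap a b) k ↔ BenefMatched Ben u μ k := by
  simp [BenefMatched, Equiv.swap_apply_of_ne_of_ne hka hkb]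

theorem isMatching_comp_perm [Fintype I] [DecidableEq C] {μ : I → Option C}
    (hμ : IsMatching r μ) (e : Equiv.Perm I) : IsMatching r (μ ∘ e) := fun c =>
  (card_equiv e (t := {i | μ i = some c}) fun i => by simp).trans_le (hμ c)

section Exchange

variable [Fintype I] [DecidableEq I] [DecidableEq C] {μ : I → Option C}

theorem MaxBeneficiary.of_benefCount_le {ν : I → Option C} (hμ : MaxBeneficiary r Ben u μ)
    (hν : IsMatching r ν) (hle : benefCount Ben u μ ≤ benefCount Ben u ν) :
    MaxBeneficiary r Ben u ν :=
  ⟨hν, fun ρ hρ => (hμ.2 ρ hρ).trans hle⟩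

theorem benefCount_le_comp_swap {a b : I} (ha : ¬ BenefMatched Ben u μ a)
    (hb : BenefMatched Ben u μ b → BenefMatched Ben u (μ ∘ Equiv.swap a b) a) :
    benefCount Ben u μ ≤ benefCount Ben u (μ ∘ Equiv.swap a b) := by
  refine card_le_card_of_injOn (Equiv.swap a b) (fun k hk => ?_)
    (Equiv.swap a b).injective.injOn
  simp only [coe_filter, mem_univ, true_and, Set.mem_ofPred_eq] at hk ⊢
  by_cases hkb : k = b
  · subst hkb
    rw [Equiv.swap_apply_right]
    exact hb hk
  · have hka : k ≠ a := by rintro rfl; exact ha hk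
    rw [Equiv.swap_apply_of_ne_of_ne hka hkb]
    exact (benefMatched_comp_swap_iff hka hkb).2 hk

theorem benefCount_lt_comp_swap {a b : I} (ha : ¬ BenefMatched Ben u μ a)
    (hb : ¬ BenefMatched Ben u μ b) (h : BenefMatched Ben u (μ ∘ Equiv.swap a b) a) :
    benefCount Ben u μ < benefCount Ben u (μ ∘ Equiv.swap a b) := by
  refine card_lt_card ((ssubset_iff_of_subset fun k hk => ?_).2
    ⟨a, by simpa using h, by simpa using ha⟩)
  simp only [mem_filter, mem_univ, true_and] at hk ⊢
  have hka : k ≠ a := by rintro rfl; exact ha hk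
  have hkb : k ≠ b := by rintro rfl; exact hb hk
  exact (benefMatched_comp_swap_iff hka hkb).2 hk

theorem MaxBeneficiary.mem_ben_of_unmatched (hμ : MaxBeneficiary r Ben u μ) {i i' : I} {c : C}
    (hi : μ i = some c) (hc : c ≠ u) (hi' : μ i' = none) (hi'c : i' ∈ Ben c) :
    i ∈ Ben c := by
  by_contra hic
  have hlt := benefCount_lt_comp_swap (μ := μ) (a := i') (b := i) (by simp [BenefMatched, hi'])
    (by rintro ⟨d, hd, -, hid⟩; rw [hi] at hd; cases hd; exact hic hid)
    ⟨c, by simp [hi], hc, hi'c⟩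
  exact (hμ.2 _ (isMatching_comp_perm hμ.1 _)).not_gt hlt

end Exchange

section Step1

variable [Fintype I] [DecidableEq I] [DecidableEq C]

def consistentMatchings (r : C → ℕ) (Ben : C → Finset I) (u : C) (Ju J : Finset I) :
    Set (I → Option C) :=
  {μ | MaxBeneficiary r Ben u μ ∧ (∀ j ∈ Ju, μ j = some u) ∧
    ∀ j ∈ J, BenefMatched Ben u μ j}

theorem consistentMatchings_empty :
    consistentMatchings r Ben u ∅ ∅ = {μ | MaxBeneficiary r Ben u μ} := by
  ext μ
  simp [consistentMatchings]

variable [Fintype C] {st : SmartState I C} {L : List I} {μ ν : I → Option C} {i i' : I}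

theorem smartStep_Ms (h : st.Ms = consistentMatchings r Ben u st.Ju st.J) (i : I) :
    (smartStep Ben u n st i).Ms = consistentMatchings r Ben u (smartStep Ben u n st i).Ju
      (smartStep Ben u n st i).J := by
  unfold smartStep
  split_ifs
  any_goals exact h
  all_goals
    ext μ
    simp only [h, consistentMatchings, Set.mem_ofPred_eq, forall_mem_insert]
    tauto

theorem smartStep_card_Ju_le (h : #st.Ju ≤ n) (i : I) :
    #(smartStep Ben u n st i).Ju ≤ n := by
  unfold smartStep
  split_ifs with h1
  · exact (card_insert_le _ _).trans h1.1
  · exact h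
  · exact h

theorem subset_smartStep (i : I) :
    st.Ju ⊆ (smartStep Ben u n st i).Ju ∧ st.J ⊆ (smartStep Ben u n st i).J := by
  unfold smartStep
  split_ifs
  · exact ⟨subset_insert _ _, subset_rfl⟩
  · exact ⟨subset_rfl, subset_insert _ _⟩
  · exact ⟨subset_rfl, subset_rfl⟩

theorem smartStep_committed_subset (i : I) :
    (smartStep Ben u n st i).Ju ∪ (smartStep Ben u n st i).J ⊆ insert i (st.Ju ∪ st.J) := by
  unfold smartStep
  split_ifs
  · simp only [insert_union, subset_refl]
  · simp only [union_insert, subset_refl]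
  · exact subset_insert _ _

theorem smartStep_passed {i : I} (hJu : i ∉ (smartStep Ben u n st i).Ju)
    (hJ : i ∉ (smartStep Ben u n st i).J) :
    ¬ (#st.Ju < n ∧ ∃ μ ∈ st.Ms, μ i = some u) ∧
      ¬ ∃ μ ∈ st.Ms, BenefMatched Ben u μ i := by
  unfold smartStep at hJu hJ
  split_ifs at hJu hJ with h1 h2
  · exact absurd (mem_insert_self i _) hJu
  · exact absurd (mem_insert_self i _) hJ
  · exact ⟨h1, h2⟩

theorem foldl_smartStep_Ms (L : List I) (h : st.Ms = consistentMatchings r Ben u st.Ju st.J) :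
    (L.foldl (smartStep Ben u n) st).Ms = consistentMatchings r Ben u
      (L.foldl (smartStep Ben u n) st).Ju (L.foldl (smartStep Ben u n) st).J :=
  List.foldlRecOn (motive := fun s : SmartState I C => s.Ms = consistentMatchings r Ben u s.Ju s.J)
    L _ h fun _ hs i _ => smartStep_Ms hs i

theorem foldl_smartStep_card_Ju_le (L : List I) (h : #st.Ju ≤ n) :
    #(L.foldl (smartStep Ben u n) st).Ju ≤ n :=
  List.foldlRecOn (motive := fun s : SmartState I C => #s.Ju ≤ n) L _ h
    fun _ hs i _ => smartStep_card_Ju_le hs i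

theorem subset_foldl_smartStep (L : List I) :
    st.Ju ⊆ (L.foldl (smartStep Ben u n) st).Ju ∧ st.J ⊆ (L.foldl (smartStep Ben u n) st).J :=
  List.foldlRecOn (motive := fun s : SmartState I C => st.Ju ⊆ s.Ju ∧ st.J ⊆ s.J) L _
    ⟨subset_rfl, subset_rfl⟩ fun _ hs i _ =>
      ⟨hs.1.trans (subset_smartStep i).1, hs.2.trans (subset_smartStep i).2⟩

theorem foldl_smartStep_committed_subset (L : List I) :
    (L.foldl (smartStep Ben u n) st).Ju ∪ (L.foldl (smartStep Ben u n) st).J ⊆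
      st.Ju ∪ st.J ∪ L.toFinset :=
  List.foldlRecOn
    (motive := fun s : SmartState I C => s.Ju ∪ s.J ⊆ st.Ju ∪ st.J ∪ L.toFinset) L _
    subset_union_left fun _ hs i hi =>
      (smartStep_committed_subset i).trans (insert_subset (by simp [hi]) hs)

theorem mem_smartRun_Ms :
    μ ∈ (smartRun r Ben u n L).Ms ↔ MaxBeneficiary r Ben u μ ∧
      (∀ j ∈ (smartRun r Ben u n L).Ju, μ j = some u) ∧
      ∀ j ∈ (smartRun r Ben u n L).J, BenefMatched Ben u μ j := by
  rw [smartRun, foldl_smartStep_Ms L consistentMatchings_empty.symm]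
  rfl

theorem smartRun_card_Ju_le (L : List I) : #(smartRun r Ben u n L).Ju ≤ n :=
  foldl_smartStep_card_Ju_le L (by simp)

/-- As `L` lists the patients by decreasing baseline priority, `π i' < π j` says that `j` was
processed before `i'`. -/
theorem smartRun_passedOver (hL : ∀ i, i ∈ L) (hsort : L.Pairwise fun a b => π b < π a)
    (hJu : i' ∉ (smartRun r Ben u n L).Ju) (hJ : i' ∉ (smartRun r Ben u n L).J)
    (hν : MaxBeneficiary r Ben u ν)
    (hνJu : ∀ j ∈ (smartRun r Ben u n L).Ju, π i' < π j → ν j = some u)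
    (hνJ : ∀ j ∈ (smartRun r Ben u n L).J, π i' < π j → BenefMatched Ben u ν j) :
    ¬ BenefMatched Ben u ν i' ∧
      (ν i' = some u → ∀ j ∈ (smartRun r Ben u n L).Ju, π i' < π j) := by
  obtain ⟨A, B, rfl⟩ := List.append_of_mem (hL i')
  set st := A.foldl (smartStep Ben u n) ⟨∅, ∅, {μ | MaxBeneficiary r Ben u μ}⟩ with hst
  have hrun : smartRun r Ben u n (A ++ i' :: B) =
      B.foldl (smartStep Ben u n) (smartStep Ben u n st i') := by
    rw [smartRun, List.foldl_append]
    rfl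
  have hmono : st.Ju ⊆ (smartRun r Ben u n (A ++ i' :: B)).Ju ∧
      st.J ⊆ (smartRun r Ben u n (A ++ i' :: B)).J := by
    rw [hrun]
    exact ⟨(subset_smartStep i').1.trans (subset_foldl_smartStep B).1,
      (subset_smartStep i').2.trans (subset_foldl_smartStep B).2⟩
  have hearlier : ∀ j ∈ st.Ju ∪ st.J, π i' < π j := by
    intro j hj
    have hjA : j ∈ A := by simpa using foldl_smartStep_committed_subset A hj
    exact (List.pairwise_append.1 hsort).2.2 j hjA i' List.mem_cons_self
  have hνst : ν ∈ st.Ms := by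
    rw [hst, foldl_smartStep_Ms A consistentMatchings_empty.symm]
    exact ⟨hν, fun j hj => hνJu j (hmono.1 hj) (hearlier j (mem_union_left _ hj)),
      fun j hj => hνJ j (hmono.2 hj) (hearlier j (mem_union_right _ hj))⟩
  rw [hrun] at hJu hJ
  obtain ⟨hnotU, hnotB⟩ := smartStep_passed
    (fun h => hJu ((subset_foldl_smartStep B).1 h)) (fun h => hJ ((subset_foldl_smartStep B).2 h))
  refine ⟨fun hb => hnotB ⟨ν, hνst, hb⟩, fun hνu j hj => ?_⟩
  have hfull : n ≤ #st.Ju := not_lt.1 fun hlt => hnotU ⟨hlt, ν, hνst, hνu⟩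
  have hsame : st.Ju = (smartRun r Ben u n (A ++ i' :: B)).Ju :=
    eq_of_subset_of_card_le hmono.1 (smartRun_card_Ju_le _ |>.trans hfull)
  exact hearlier j (mem_union_left _ (hsame ▸ hj))

theorem not_benefMatched_of_passedOver (hL : ∀ i, i ∈ L)
    (hsort : L.Pairwise fun a b => π b < π a) (hμ : μ ∈ (smartRun r Ben u n L).Ms)
    (hJu : i' ∉ (smartRun r Ben u n L).Ju) (hJ : i' ∉ (smartRun r Ben u n L).J) :
    ¬ BenefMatched Ben u μ i' :=
  have ⟨hmax, hμJu, hμJ⟩ := mem_smartRun_Ms.1 hμ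
  (smartRun_passedOver hL hsort hJu hJ hmax (fun j hj _ => hμJu j hj) fun j hj _ => hμJ j hj).1

theorem smartRun_passedOver_comp_swap (hL : ∀ i, i ∈ L)
    (hsort : L.Pairwise fun a b => π b < π a) (hμ : μ ∈ (smartRun r Ben u n L).Ms)
    (hJu : i' ∉ (smartRun r Ben u n L).Ju) (hJ : i' ∉ (smartRun r Ben u n L).J)
    (hlater : π i ≤ π i') (hmax : MaxBeneficiary r Ben u (μ ∘ Equiv.swap i' i)) :
    ¬ BenefMatched Ben u (μ ∘ Equiv.swap i' i) i' ∧
      (μ i = some u → ∀ j ∈ (smartRun r Ben u n L).Ju, π i' < π j) := by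
  obtain ⟨-, hμJu, hμJ⟩ := mem_smartRun_Ms.1 hμ
  have hne : ∀ j, π i' < π j → j ≠ i' ∧ j ≠ i := fun j hj =>
    ⟨by rintro rfl; omega, by rintro rfl; omega⟩
  have h := smartRun_passedOver hL hsort hJu hJ hmax
    (fun j hj hlt => by
      rw [Function.comp_apply, Equiv.swap_apply_of_ne_of_ne (hne j hlt).1 (hne j hlt).2]
      exact hμJu j hj)
    fun j hj hlt => (benefMatched_comp_swap_iff (hne j hlt).1 (hne j hlt).2).2 (hμJ j hj)
  simpa using h

theorem lt_of_passedOver_of_mem_Ju (hL : ∀ i, i ∈ L)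
    (hsort : L.Pairwise fun a b => π b < π a) (hμ : μ ∈ (smartRun r Ben u n L).Ms)
    (hJu : i' ∉ (smartRun r Ben u n L).Ju) (hJ : i' ∉ (smartRun r Ben u n L).J)
    (hi : i ∈ (smartRun r Ben u n L).Ju) : π i' < π i := by
  obtain ⟨hμmax, hμJu, -⟩ := mem_smartRun_Ms.1 hμ
  by_contra hle
  have hmax := hμmax.of_benefCount_le (isMatching_comp_perm hμmax.1 _)
    (benefCount_le_comp_swap (not_benefMatched_of_passedOver hL hsort hμ hJu hJ)
      fun ⟨d, hd, hdu, _⟩ => (hdu (Option.some.inj ((hμJu i hi).symm.trans hd)).symm).elim)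
  exact hle ((smartRun_passedOver_comp_swap hL hsort hμ hJu hJ (not_lt.1 hle) hmax).2
    (hμJu i hi) i hi)

theorem lt_of_passedOver_of_mem_J (hL : ∀ i, i ∈ L)
    (hsort : L.Pairwise fun a b => π b < π a) (hμ : μ ∈ (smartRun r Ben u n L).Ms)
    (hJu : i' ∉ (smartRun r Ben u n L).Ju) (hJ : i' ∉ (smartRun r Ben u n L).J)
    {d : C} (hid : μ i = some d) (hdu : d ≠ u) (hi'd : i' ∈ Ben d) : π i' < π i := by
  obtain ⟨hμmax, -, -⟩ := mem_smartRun_Ms.1 hμ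
  have hswap : BenefMatched Ben u (μ ∘ Equiv.swap i' i) i' :=
    ⟨d, by simpa using hid, hdu, hi'd⟩
  by_contra hle
  have hmax := hμmax.of_benefCount_le (isMatching_comp_perm hμmax.1 _)
    (benefCount_le_comp_swap (not_benefMatched_of_passedOver hL hsort hμ hJu hJ) fun _ => hswap)
  exact (smartRun_passedOver_comp_swap hL hsort hμ hJu hJ (not_lt.1 hle) hmax).1 hswap

theorem benefCount_le_card_smartRun_J (hL : ∀ i, i ∈ L)
    (hsort : L.Pairwise fun a b => π b < π a) (hμ : μ ∈ (smartRun r Ben u n L).Ms) :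
    benefCount Ben u μ ≤ #(smartRun r Ben u n L).J := by
  obtain ⟨-, hμJu, -⟩ := mem_smartRun_Ms.1 hμ
  refine card_le_card fun k hk => ?_
  have hkb : BenefMatched Ben u μ k := (mem_filter.1 hk).2
  by_contra hkJ
  by_cases hkJu : k ∈ (smartRun r Ben u n L).Ju
  · obtain ⟨c, hc, hcu, -⟩ := hkb
    exact hcu (Option.some.inj ((hμJu k hkJu).symm.trans hc)).symm
  · exact not_benefMatched_of_passedOver hL hsort hμ hkJu hkJ hkb

end Step1

section Fill

theorem fillOne_cases [DecidableEq I] (pr : C → Option I → ℕ) (π : I → ℕ) (c : C)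
    (st : (I → Option C) × Finset I) :
    ((∀ i ∈ st.2, ¬ Elig pr c i) ∧ fillOne pr π c st = st) ∨
      ∃ a ∈ st.2, Elig pr c a ∧ (∀ j ∈ st.2, Elig pr c j → π j ≤ π a) ∧
        fillOne pr π c st = (Function.update st.1 a (some c), st.2.erase a) := by
  unfold fillOne
  split_ifs with h
  · obtain ⟨ha, hmax⟩ := Classical.choose_spec (exists_max_image _ π h)
    exact Or.inr ⟨_, (mem_filter.1 ha).1, (mem_filter.1 ha).2,
      fun j hj hjc => hmax j (mem_filter.2 ⟨hj, hjc⟩), rfl⟩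
  · exact Or.inl ⟨fun i hi hic => h ⟨i, mem_filter.2 ⟨hi, hic⟩⟩, rfl⟩

theorem card_filter_update_some [Fintype I] [DecidableEq I] [DecidableEq C]
    {μ : I → Option C} {a : I} (ha : μ a = none) (c d : C) :
    #{i | Function.update μ a (some c) i = some d} =
      #{i | μ i = some d} + if c = d then 1 else 0 := by
  split_ifs with hcd
  · subst hcd
    rw [← card_insert_of_notMem (s := {i | μ i = some c}) (a := a) (by simp [ha])]
    congr 1
    ext k
    by_cases hk : k = a <;> simp [hk, ha]
  · congr 1
    ext k
    by_cases hk : k = a <;> simp [hk, ha, hcd]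

theorem List.count_cons_eq_add_ite [DecidableEq C] (c d : C) (Q : List C) :
    (c :: Q).count d = Q.count d + if c = d then 1 else 0 := by
  simp [List.count_cons]

variable [Fintype I] [DecidableEq C]

/-- Step 2 started from the assignment `g` with unassigned patients `A₀`, and the units of
`Q` still to be filled. -/
structure FillInvariant (pr : C → Option I → ℕ) (π : I → ℕ) (r : C → ℕ)
    (A₀ : Finset I) (g : I → Option C) (st : (I → Option C) × Finset I) (Q : List C) :
    Prop where
  none_iff : ∀ i, st.1 i = none ↔ i ∈ st.2
  subset : st.2 ⊆ A₀
  eq_of_notMem : ∀ i ∉ A₀, st.1 i = g i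
  elig : CompliesEligibility pr st.1
  budget : ∀ c, #{i | st.1 i = some c} + Q.count c ≤ r c
  full : ∀ c, (∃ i ∈ st.2, Elig pr c i) → #{i | st.1 i = some c} + Q.count c = r c
  prio : ∀ i ∈ A₀, ∀ c, st.1 i = some c → ∀ i' ∈ st.2, Elig pr c i' → π i' < π i

variable {A₀ : Finset I} {g : I → Option C} {st : (I → Option C) × Finset I} {c : C}
  {Q : List C}

theorem FillInvariant.of_forall_not_elig (h : FillInvariant pr π r A₀ g st (c :: Q))
    (hc : ∀ i ∈ st.2, ¬ Elig pr c i) : FillInvariant pr π r A₀ g st Q where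
  none_iff := h.none_iff
  subset := h.subset
  eq_of_notMem := h.eq_of_notMem
  elig := h.elig
  budget d := by
    have := h.budget d
    rw [List.count_cons_eq_add_ite] at this
    omega
  full d hd := by
    obtain ⟨i, hi, hid⟩ := hd
    have hcd : c ≠ d := by rintro rfl; exact hc i hi hid
    simpa [List.count_cons_eq_add_ite, hcd] using h.full d ⟨i, hi, hid⟩
  prio := h.prio

theorem FillInvariant.update [DecidableEq I] (hπ : Function.Injective π)
    (h : FillInvariant pr π r A₀ g st (c :: Q)) {a : I} (ha : a ∈ st.2) (hac : Elig pr c a)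
    (hmax : ∀ j ∈ st.2, Elig pr c j → π j ≤ π a) :
    FillInvariant pr π r A₀ g (Function.update st.1 a (some c), st.2.erase a) Q := by
  have hnone : st.1 a = none := (h.none_iff a).2 ha
  have hcount (d : C) : #{i | Function.update st.1 a (some c) i = some d} + Q.count d =
      #{i | st.1 i = some d} + (c :: Q).count d := by
    rw [card_filter_update_some hnone, List.count_cons_eq_add_ite]
    omega
  refine ⟨fun i => ?_, (erase_subset _ _).trans h.subset, fun i hi => ?_, fun i d hid => ?_,
    fun d => hcount d ▸ h.budget d,
    fun d ⟨i, hi, hid⟩ => hcount d ▸ h.full d ⟨i, mem_of_mem_erase hi, hid⟩,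
    fun i hi d hid i' hi' hi'd => ?_⟩
  · by_cases hia : i = a
    · subst hia; simp
    · simp [hia, h.none_iff]
  · have hia : i ≠ a := by rintro rfl; exact hi (h.subset ha)
    simpa [hia] using h.eq_of_notMem i hi
  · by_cases hia : i = a
    · subst hia
      simp only [Function.update_self, Option.some.injEq] at hid
      exact hid ▸ hac
    · exact h.elig i d (by simpa [hia] using hid)
  · obtain ⟨hi'a, hi'st⟩ := mem_erase.1 hi'
    by_cases hia : i = a
    · subst hia
      obtain rfl : c = d := by simpa using hid
      exact (hmax i' hi'st hi'd).lt_of_ne fun e => hi'a (hπ e)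
    · exact h.prio i hi d (by simpa [hia] using hid) i' hi'st hi'd

theorem FillInvariant.foldl_fillOne [DecidableEq I] (hπ : Function.Injective π) :
    ∀ {Q : List C} {st : (I → Option C) × Finset I}, FillInvariant pr π r A₀ g st Q →
      FillInvariant pr π r A₀ g (Q.foldl (fun st c => fillOne pr π c st) st) []
  | [], _, h => h
  | c :: _, st, h => by
    rcases fillOne_cases pr π c st with ⟨hc, hfill⟩ | ⟨a, ha, hac, hmax, hfill⟩
    · rw [List.foldl_cons, hfill]
      exact FillInvariant.foldl_fillOne hπ (h.of_forall_not_elig hc)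
    · rw [List.foldl_cons, hfill]
      exact FillInvariant.foldl_fillOne hπ (h.update hπ ha hac hmax)

theorem FillInvariant.apply_of_mem {K : Finset I} [DecidableEq I]
    (h : FillInvariant pr π r (univ \ K) g st Q) {i : I} (hi : i ∈ K) : st.1 i = g i :=
  h.eq_of_notMem i fun h => (mem_sdiff.1 h).2 hi

theorem FillInvariant.isMatching (h : FillInvariant pr π r A₀ g st []) : IsMatching r st.1 :=
  fun c => by simpa using h.budget c

theorem FillInvariant.nonWasteful (h : FillInvariant pr π r A₀ g st []) :
    NonWasteful pr r st.1 :=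
  fun i c hic hi => by simpa using h.full c ⟨i, (h.none_iff i).1 hi, hic⟩

theorem fillInvariant_restrict [DecidableEq I] {μ : I → Option C} {K : Finset I}
    (hμ : IsMatching r μ)
    (hK : ∀ i ∈ K, ∃ c, μ i = some c ∧ Elig pr c i)
    (hQ : ∀ c, Q.count c = r c - #{i ∈ K | μ i = some c}) :
    FillInvariant pr π r (univ \ K) (fun i => if i ∈ K then μ i else none)
      (fun i => if i ∈ K then μ i else none, univ \ K) Q := by
  have hcount (c : C) : #{i | (if i ∈ K then μ i else none) = some c} + Q.count c = r c := by
    have hle : #{i ∈ K | μ i = some c} ≤ r c :=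
      (card_le_card (filter_subset_filter _ (subset_univ K))).trans (hμ c)
    have hfilter : ({i | (if i ∈ K then μ i else none) = some c} : Finset I) =
        {i ∈ K | μ i = some c} := by
      ext i; by_cases hi : i ∈ K <;> simp [hi]
    rw [hfilter, hQ]
    omega
  refine ⟨fun i => ?_, subset_rfl, fun i hi => rfl, fun i c hic => ?_,
    fun c => (hcount c).le, fun c _ => hcount c, fun i hi c hic => ?_⟩
  · by_cases hi : i ∈ K
    · obtain ⟨c, hc, -⟩ := hK i hi
      simp [hi, hc]
    · simp [hi]
  · by_cases hi : i ∈ K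
    · obtain ⟨d, hd, hdi⟩ := hK i hi
      simp only [hi, if_true, hd, Option.some.injEq] at hic
      exact hic ▸ hdi
    · simp [hi] at hic
  · simp [(mem_sdiff.1 hi).2] at hic

end Fill

section SmartMatching

variable [DecidableEq I] [DecidableEq C] {μ : I → Option C} {Ju J : Finset I}
  {P : List C}

theorem count_fill_list (hJu : ∀ j ∈ Ju, μ j = some u)
    (hJ : ∀ j ∈ J, BenefMatched Ben u μ j) (huP : u ∉ P)
    (hP : ∀ c, c ≠ u → P.count c = r c - #{i ∈ J | μ i = some c}) (c : C) :
    (P ++ List.replicate (r u - #Ju) u).count c = r c - #{i ∈ Ju ∪ J | μ i = some c} := by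
  by_cases hcu : c = u
  · subst hcu
    have hfilter : ({i ∈ Ju ∪ J | μ i = some c} : Finset I) = Ju := by
      ext i
      constructor
      · intro hi'
        obtain ⟨hi, hic⟩ := mem_filter.1 hi'
        refine (mem_union.1 hi).resolve_right fun hiJ => ?_
        obtain ⟨d, hd, hdc, -⟩ := hJ i hiJ
        exact hdc (Option.some.inj (hd.symm.trans hic))
      · exact fun hi => mem_filter.2 ⟨mem_union_left _ hi, hJu i hi⟩
    simp [hfilter, List.count_eq_zero_of_not_mem huP]
  · have hfilter : ({i ∈ Ju ∪ J | μ i = some c} : Finset I) = {i ∈ J | μ i = some c} := by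
      rw [filter_union, union_eq_right]
      intro i hi
      obtain ⟨hiJu, hic⟩ := mem_filter.1 hi
      exact absurd (Option.some.inj ((hJu i hiJu).symm.trans hic)) (Ne.symm hcu)
    simp [hfilter, hP c hcu, List.count_replicate, Ne.symm hcu]

theorem respectsPriorities_of_fillInvariant [Fintype I] [Fintype C] {L : List I}
    (hB : BaselineInduced π Ben u pr) (hL : ∀ i, i ∈ L)
    (hsort : L.Pairwise fun a b => π b < π a) (hμ : μ ∈ (smartRun r Ben u n L).Ms)
    {g : I → Option C} {F : (I → Option C) × Finset I}
    (hF : FillInvariant pr π r (univ \ ((smartRun r Ben u n L).Ju ∪ (smartRun r Ben u n L).J))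
      g F [])
    (hg : ∀ i ∈ (smartRun r Ben u n L).Ju ∪ (smartRun r Ben u n L).J, g i = μ i)
    (hmax : MaxBeneficiary r Ben u F.1) :
    RespectsPriorities pr F.1 := by
  obtain ⟨-, hμJu, hμJ⟩ := mem_smartRun_Ms.1 hμ
  refine respectsPriorities_of_elig hF.elig fun i i' c hi hi' hi'c => ?_
  have hi'pool := (hF.none_iff i').1 hi'
  obtain ⟨hi'Ju, hi'J⟩ :
      i' ∉ (smartRun r Ben u n L).Ju ∧ i' ∉ (smartRun r Ben u n L).J := by
    simpa using hF.subset hi'pool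
  have hfix : ∀ j ∈ (smartRun r Ben u n L).Ju ∪ (smartRun r Ben u n L).J, F.1 j = μ j :=
    fun j hj => (hF.apply_of_mem hj).trans (hg j hj)
  by_cases hiJu : i ∈ (smartRun r Ben u n L).Ju
  · obtain rfl : u = c := by simpa [hfix i (mem_union_left _ hiJu), hμJu i hiJu] using hi
    exact (hB.pr_u_lt_iff i i').2 (lt_of_passedOver_of_mem_Ju hL hsort hμ hi'Ju hi'J hiJu)
  by_cases hiJ : i ∈ (smartRun r Ben u n L).J
  · obtain ⟨d, hd, hdu, hid⟩ := hμJ i hiJ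
    obtain rfl : d = c := by simpa [hfix i (mem_union_right _ hiJ), hd] using hi
    refine hB.pr_lt d hdu i i' (hF.elig i d hi) hi'c ?_
    by_cases hi'd : i' ∈ Ben d
    · exact Or.inr ⟨iff_of_true hid hi'd,
        lt_of_passedOver_of_mem_J hL hsort hμ hi'Ju hi'J hd hdu hi'd⟩
    · exact Or.inl ⟨hid, hi'd⟩
  have hlt := hF.prio i (by simp [hiJu, hiJ]) c hi i' hi'pool hi'c
  by_cases hcu : c = u
  · subst hcu
    exact (hB.pr_u_lt_iff i i').2 hlt
  refine hB.pr_lt c hcu i i' (hF.elig i c hi) hi'c ?_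
  by_cases hic : i ∈ Ben c
  · by_cases hi'c' : i' ∈ Ben c
    · exact Or.inr ⟨iff_of_true hic hi'c', hlt⟩
    · exact Or.inl ⟨hic, hi'c'⟩
  · exact Or.inr ⟨iff_of_false hic fun h => hic (hmax.mem_ben_of_unmatched hi hcu hi' h), hlt⟩

theorem maxBeneficiary_of_fillInvariant [Fintype I] [Fintype C] {L : List I}
    (hL : ∀ i, i ∈ L) (hsort : L.Pairwise fun a b => π b < π a)
    (hμ : μ ∈ (smartRun r Ben u n L).Ms) {g : I → Option C} {F : (I → Option C) × Finset I}
    (hF : FillInvariant pr π r (univ \ ((smartRun r Ben u n L).Ju ∪ (smartRun r Ben u n L).J))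
      g F [])
    (hg : ∀ i ∈ (smartRun r Ben u n L).Ju ∪ (smartRun r Ben u n L).J, g i = μ i) :
    MaxBeneficiary r Ben u F.1 := by
  obtain ⟨hμmax, -, hμJ⟩ := mem_smartRun_Ms.1 hμ
  have hJ : ∀ j ∈ (smartRun r Ben u n L).J, BenefMatched Ben u F.1 j := fun j hj => by
    have hj' := mem_union_right (smartRun r Ben u n L).Ju hj
    simpa [BenefMatched, hF.apply_of_mem hj', hg j hj'] using hμJ j hj
  exact hμmax.of_benefCount_le hF.isMatching ((benefCount_le_card_smartRun_J hL hsort hμ).trans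
    (card_le_card fun j hj => mem_filter.2 ⟨mem_univ j, hJ j hj⟩))

end SmartMatching

end SmartReserveMatching

section ReserveSystem

variable {I C : Type*} [Fintype I] [DecidableEq I] [Fintype C] [DecidableEq C]

theorem smart_matchings_properties_general
    (π : I → ℕ) (hπ : Function.Injective π)
    (Ben : C → Finset I) (u : C)
    (pr : C → Option I → ℕ)
    (r : C → ℕ)
    (hbase : BaselineSoft π Ben u pr ∨ BaselineHard π Ben u pr)
    (n : ℕ)
    (σ : I → Option C) (hσ : σ ∈ SmartMatchings pr π r Ben u n) :
    CompliesEligibility pr σ ∧ NonWasteful pr r σ ∧ RespectsPriorities pr σ ∧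
      MaxBeneficiary r Ben u σ := by
  have hB : BaselineInduced π Ben u pr := hbase.elim (·.baselineInduced) (·.baselineInduced)
  obtain ⟨L, -, hL, hsort, μ, hμ, P, huP, hP, rfl⟩ := hσ
  set S := smartRun r Ben u n L
  obtain ⟨hμmax, hμJu, hμJ⟩ := mem_smartRun_Ms.1 hμ
  have hcommitted : ∀ i ∈ S.Ju ∪ S.J, ∃ c, μ i = some c ∧ Elig pr c i := by
    intro i hi
    rcases mem_union.1 hi with hiJu | hiJ
    · exact ⟨u, hμJu i hiJu, hB.elig_u i⟩
    · obtain ⟨c, hc, hcu, hic⟩ := hμJ i hiJ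
      exact ⟨c, hc, hB.elig_of_mem c hcu i hic⟩
  have hF := (fillInvariant_restrict hμmax.1 hcommitted
    (count_fill_list hμJu hμJ huP hP)).foldl_fillOne hπ
  have hg : ∀ i ∈ S.Ju ∪ S.J, (if i ∈ S.Ju ∪ S.J then μ i else none) = μ i :=
    fun i hi => if_pos hi
  have hmax := maxBeneficiary_of_fillInvariant hL hsort hμ hF hg
  exact ⟨hF.elig, hF.nonWasteful, respectsPriorities_of_fillInvariant hB hL hsort hμ hF hg hmax,
    hmax⟩

/-- Proposition 4: for a soft or hard reserve system induced by a baseline priority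
order and any `n ∈ {0, …, r_u}`, every smart reserve matching in `M_S^n` complies with
eligibility requirements, is non-wasteful, respects priorities, and is maximal in
beneficiary assignment. -/
theorem smart_matchings_properties
    (π : I → ℕ) (hπ : Function.Injective π)
    (Ben : C → Finset I) (u : C) (hBu : Ben u = univ)
    (pr : C → Option I → ℕ) (hpr : ∀ c, Function.Injective (pr c))
    (r : C → ℕ)
    (hbase : BaselineSoft π Ben u pr ∨ BaselineHard π Ben u pr)
    (n : ℕ) (hn : n ≤ r u)
    (σ : I → Option C) (hσ : σ ∈ SmartMatchings pr π r Ben u n) :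
    CompliesEligibility pr σ ∧ NonWasteful pr r σ ∧ RespectsPriorities pr σ ∧
      MaxBeneficiary r Ben u σ :=
  smart_matchings_properties_general π hπ Ben u pr r hbase n σ hσ

end ReserveSystem
end

section
/- Existence of beneficiary alternating paths: let μ and ν be two matchings such that for every preferential treatment category c, |μ⁻¹(c) ∩ I_c| = |ν⁻¹(c) ∩ I_c|, and suppose some patient i is matched under ν with a preferential treatment category she is a beneficiary of but is not matched under μ with any preferential treatment category she is a beneficiary of. Then there exists a beneficiary alternating path from μ to ν beginning with patient i: a nonempty finite sequence (i_1, ..., i_m̄) with i_1 = i, such that i_1 is not matched under μ to a beneficiary category (or is matched to u) and is matched under ν to a beneficiary preferential category; for each 2 ≤ m ≤ m̄ − 1, i_m is matched under μ to the category ν(i_{m−1}) of which she is a beneficiary and is matched under ν to a beneficiary preferential category; and i_{m̄} is matched under μ to ν(i_{m̄−1}) of which she is a beneficiary, but under ν is either not matched to a category she is a beneficiary of or is matched to u. -/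
open Finset

section ReserveSystem

variable {I C : Type*} [Fintype I] [DecidableEq I] [Fintype C] [DecidableEq C]

/-- Existence of beneficiary alternating paths: if `μ` and `ν` use the same number of
beneficiary slots in every preferential treatment category, and `i` is beneficiary-
matched under `ν` but not under `μ`, then there is a beneficiary alternating path from
`μ` to `ν` beginning with `i`. -/
theorem beneficiary_alternating_path
    (r : C → ℕ) (Ben : C → Finset I) (u : C)
    (μ ν : I → Option C) (hμ : IsMatching r μ) (hν : IsMatching r ν)
    (hcount : ∀ c, c ≠ u →
      (univ.filter (fun i => μ i = some c ∧ i ∈ Ben c)).card =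
      (univ.filter (fun i => ν i = some c ∧ i ∈ Ben c)).card)
    (i : I) (hiν : BenefMatched Ben u ν i) (hiμ : ¬ BenefMatched Ben u μ i) :
    ∃ (n : ℕ) (p : Fin (n + 1) → I),
      p 0 = i ∧
      ¬ BenefMatched Ben u μ (p 0) ∧
      (∀ k : Fin n, BenefMatched Ben u ν (p k.castSucc)) ∧
      (∀ k : Fin n, ∃ c, c ≠ u ∧ ν (p k.castSucc) = some c ∧
        μ (p k.succ) = some c ∧ p k.succ ∈ Ben c) ∧
      ¬ BenefMatched Ben u ν (p (Fin.last n)) := by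
  classical
  set Bset : C → Finset I := fun c => univ.filter (fun j => ν j = some c ∧ j ∈ Ben c) with hBdef
  set Aset : C → Finset I := fun c => univ.filter (fun j => μ j = some c ∧ j ∈ Ben c) with hAdef
  have hcard : ∀ c, c ≠ u → (Bset c).card = (Aset c).card := fun c hc => (hcount c hc).symm
  let e : ∀ c, c ≠ u → (Bset c ≃ Aset c) := fun c hc => Finset.equivOfCardEq (hcard c hc)
  let f : I → I := fun j =>
    if h : BenefMatched Ben u ν j then
      ((e h.choose h.choose_spec.2.1 ⟨j, by
        simp only [hBdef, mem_filter, mem_univ, true_and]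
        exact ⟨h.choose_spec.1, h.choose_spec.2.2⟩⟩ : Aset h.choose) : I)
    else j
  -- characterization of f on ν-beneficiary-matched patients
  have fspec : ∀ j (h : BenefMatched Ben u ν j),
      ∃ (c : C) (hc : c ≠ u) (hm : j ∈ Bset c),
        ν j = some c ∧ f j = ((e c hc ⟨j, hm⟩ : Aset c) : I) := by
    intro j h
    refine ⟨h.choose, h.choose_spec.2.1, ?_, h.choose_spec.1, ?_⟩
    · simp only [hBdef, mem_filter, mem_univ, true_and]
      exact ⟨h.choose_spec.1, h.choose_spec.2.2⟩
    · simp only [f, dif_pos h]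
  have fmem : ∀ j, BenefMatched Ben u ν j →
      ∃ c, c ≠ u ∧ ν j = some c ∧ μ (f j) = some c ∧ f j ∈ Ben c := by
    intro j h
    obtain ⟨c, hc, hm, hνj, hfj⟩ := fspec j h
    have hA : f j ∈ Aset c := by rw [hfj]; exact (e c hc ⟨j, hm⟩).2
    simp only [hAdef, mem_filter, mem_univ, true_and] at hA
    exact ⟨c, hc, hνj, hA.1, hA.2⟩
  have fben : ∀ j, BenefMatched Ben u ν j → BenefMatched Ben u μ (f j) := by
    intro j h
    obtain ⟨c, hc, _, h1, h2⟩ := fmem j h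
    exact ⟨c, h1, hc, h2⟩
  have finj : ∀ j1 j2, BenefMatched Ben u ν j1 → BenefMatched Ben u ν j2 →
      f j1 = f j2 → j1 = j2 := by
    intro j1 j2 h1 h2 hf
    obtain ⟨c1, hc1, hm1, hν1, he1⟩ := fspec j1 h1
    obtain ⟨c2, hc2, hm2, hν2, he2⟩ := fspec j2 h2
    obtain ⟨c1', hc1', hν1', hμ1, _⟩ := fmem j1 h1
    obtain ⟨c2', hc2', hν2', hμ2, _⟩ := fmem j2 h2
    have hcc : c1 = c2 := by
      have e1 : c1 = c1' := by rw [hν1] at hν1'; exact (Option.some_inj.mp hν1')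
      have e2 : c2 = c2' := by rw [hν2] at hν2'; exact (Option.some_inj.mp hν2')
      rw [hf] at hμ1
      rw [e1, e2]
      rw [hμ1] at hμ2
      exact Option.some_inj.mp hμ2
    subst hcc
    rw [he1, he2] at hf
    have := (e c1 hc1).injective (Subtype.ext hf)
    exact congrArg Subtype.val this
  -- the iterated sequence
  set g : ℕ → I := fun n => f^[n] i with hgdef
  have hg0 : g 0 = i := rfl
  have hgsucc : ∀ n, g (n + 1) = f (g n) := fun n => Function.iterate_succ_apply' f n i
  -- termination: some g n is not ν-beneficiary-matched
  have hterm : ∃ n, ¬ BenefMatched Ben u ν (g n) := by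
    by_contra hall
    push_neg at hall
    have ginj : Function.Injective g := by
      intro a b hab
      induction a generalizing b with
      | zero =>
        cases b with
        | zero => rfl
        | succ b' =>
          exfalso
          apply hiμ
          rw [← hg0, hab, hgsucc]
          exact fben _ (hall b')
      | succ a' ih =>
        cases b with
        | zero =>
          exfalso
          apply hiμ
          rw [← hg0, ← hab, hgsucc]
          exact fben _ (hall a')
        | succ b' =>
          rw [hgsucc, hgsucc] at hab
          exact congrArg Nat.succ (ih (finj _ _ (hall a') (hall b') hab))
    exact (Finite.exists_ne_map_eq_of_infinite g).elim (fun a ⟨b, hne, heq⟩ => hne (ginj heq))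
  -- take the least such n
  let N := Nat.find hterm
  have hNspec : ¬ BenefMatched Ben u ν (g N) := Nat.find_spec hterm
  have hNmin : ∀ m, m < N → BenefMatched Ben u ν (g m) := by
    intro m hm
    by_contra h
    exact absurd (Nat.find_le h) (Nat.not_le.mpr hm)
  refine ⟨N, fun k => g k.val, hg0, hiμ, ?_, ?_, ?_⟩
  · intro k
    exact hNmin k.val (by simpa using k.isLt)
  · intro k
    have hk : BenefMatched Ben u ν (g k.val) := hNmin k.val (by simpa using k.isLt)
    obtain ⟨c, hc, hνc, hμc, hben⟩ := fmem _ hk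
    refine ⟨c, hc, ?_, ?_, ?_⟩
    · simpa using hνc
    · simp only [Fin.val_succ, hgsucc]; exact hμc
    · simp only [Fin.val_succ, hgsucc]; exact hben
  · simpa using hNspec

end ReserveSystem
end

section
/- Two-category swap lemma (unreserved first vs. preferential first): let I~ ⊆ I, let c be a preferential treatment category, and consider precedence orders ▷: u ▷ c and ▷': c ▷' u over {u, c}, with μ = φ_▷^{I~} and μ' = φ_{▷'}^{I~} the induced sequential reserve matchings over I~, and suppose μ(I~_c) ⊊ I~_c (some category-c beneficiary is unmatched under μ). Let I(2) = I~ ∖ μ(I~) and I'(2) = I~ ∖ μ'(I~). Then: (1) |I(2) ∖ I'(2)| = |I'(2) ∖ I(2)|; (2) I'(2) ∖ I(2) ⊆ I~_c; (3) I(2) ∖ I'(2) ⊆ I~ ∖ I~_c; (4) if i ∈ I(2) ∖ I'(2) and i' ∈ I'(2) then i π i'; (5) if i' ∈ I'(2) ∖ I(2) and i ∈ I(2) ∩ I~_c then i' π i. -/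
namespace TwoCatSwap

variable {I : Type*} [DecidableEq I]

/-- The `k` patients of `S` with the highest `f`-score (all of `S` if `|S| ≤ k`). -/
def topSel (f : I → ℕ) (k : ℕ) (S : Finset I) : Finset I :=
  S.filter fun i => (S.filter fun j => f i < f j).card < k

lemma topSel_subset (f : I → ℕ) (k : ℕ) (S : Finset I) : topSel f k S ⊆ S :=
  Finset.filter_subset _ _

lemma mem_topSel {f : I → ℕ} {k : ℕ} {S : Finset I} {i : I} :
    i ∈ topSel f k S ↔ i ∈ S ∧ (S.filter fun j => f i < f j).card < k :=
  Finset.mem_filter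

lemma rank_lt_rank {f : I → ℕ} {S : Finset I} {i j : I} (hj : j ∈ S) (h : f i < f j) :
    (S.filter fun x => f j < f x).card < (S.filter fun x => f i < f x).card := by
  apply Finset.card_lt_card
  constructor
  · intro x hx
    rcases Finset.mem_filter.mp hx with ⟨hxS, hxf⟩
    exact Finset.mem_filter.mpr ⟨hxS, lt_trans h hxf⟩
  · intro hsub
    have := Finset.mem_filter.mp (hsub (Finset.mem_filter.mpr ⟨hj, h⟩))
    exact absurd this.2 (lt_irrefl _)

lemma card_topSel {f : I → ℕ} (hf : Function.Injective f) (k : ℕ) (S : Finset I) :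
    (topSel f k S).card = min k S.card := by
  classical
  set rank : I → ℕ := fun i => (S.filter fun j => f i < f j).card with hrank
  have hrinj : Set.InjOn rank S := by
    intro a ha b hb hab
    by_contra hne
    have hfne : f a ≠ f b := fun h => hne (hf h)
    rcases lt_or_gt_of_ne hfne with h | h
    · have h2 := rank_lt_rank (S := S) hb h
      have hab' : (S.filter fun j => f a < f j).card = (S.filter fun j => f b < f j).card := hab
      omega
    · have h2 := rank_lt_rank (S := S) ha h
      have hab' : (S.filter fun j => f a < f j).card = (S.filter fun j => f b < f j).card := hab
      omega
  have hlt : ∀ i ∈ S, rank i < S.card := by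
    intro i hi
    have hsub : S.filter (fun j => f i < f j) ⊆ S.erase i := by
      intro x hx
      rcases Finset.mem_filter.mp hx with ⟨hxS, hxf⟩
      refine Finset.mem_erase.mpr ⟨?_, hxS⟩
      rintro rfl; exact absurd hxf (lt_irrefl _)
    calc rank i ≤ (S.erase i).card := Finset.card_le_card hsub
      _ < S.card := Finset.card_erase_lt_of_mem hi
  have himg : S.image rank = Finset.range S.card := by
    apply Finset.eq_of_subset_of_card_le
    · intro x hx
      rcases Finset.mem_image.mp hx with ⟨i, hi, rfl⟩
      exact Finset.mem_range.mpr (hlt i hi)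
    · rw [Finset.card_range, Finset.card_image_of_injOn hrinj]
  have heq : topSel f k S = S.filter fun i => rank i < k := rfl
  rw [heq]
  have h2 : (S.filter fun i => rank i < k).image rank
      = (Finset.range S.card).filter (fun m => m < k) := by
    rw [← himg, Finset.filter_image]
  have h3 : (S.filter fun i => rank i < k).card
      = ((Finset.range S.card).filter (fun m => m < k)).card := by
    rw [← h2, Finset.card_image_of_injOn
      (hrinj.mono (Finset.coe_subset.mpr (Finset.filter_subset _ _)))]
  rw [h3]
  have h4 : (Finset.range S.card).filter (fun m => m < k) = Finset.range (min k S.card) := by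
    ext a
    simp only [Finset.mem_filter, Finset.mem_range, Nat.lt_min]
    tauto
  rw [h4, Finset.card_range]

lemma mem_topSel_of_le {f : I → ℕ} {k : ℕ} {S : Finset I} {i j : I}
    (hi : i ∈ topSel f k S) (hj : j ∈ S) (hle : f i ≤ f j) : j ∈ topSel f k S := by
  rcases mem_topSel.mp hi with ⟨hiS, hir⟩
  refine mem_topSel.mpr ⟨hj, lt_of_le_of_lt (Finset.card_le_card ?_) hir⟩
  intro x hx
  rcases Finset.mem_filter.mp hx with ⟨hxS, hxf⟩
  exact Finset.mem_filter.mpr ⟨hxS, lt_of_le_of_lt hle hxf⟩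

lemma lt_of_mem_topSel {f : I → ℕ} {k : ℕ} {S : Finset I} {i j : I}
    (hi : i ∈ topSel f k S) (hj : j ∈ S) (hj' : j ∉ topSel f k S) : f j < f i := by
  by_contra h
  exact hj' (mem_topSel_of_le hi hj (not_lt.mp h))

lemma mem_topSel_mono {f : I → ℕ} {k : ℕ} {S S' : Finset I} {i : I}
    (hS : S' ⊆ S) (hi : i ∈ topSel f k S) (hi' : i ∈ S') : i ∈ topSel f k S' := by
  rcases mem_topSel.mp hi with ⟨_, hir⟩
  refine mem_topSel.mpr ⟨hi', lt_of_le_of_lt (Finset.card_le_card ?_) hir⟩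
  intro x hx
  rcases Finset.mem_filter.mp hx with ⟨hxS, hxf⟩
  exact Finset.mem_filter.mpr ⟨hS hxS, hxf⟩

end TwoCatSwap



open Finset

section ReserveSystem

variable {I C : Type*} [Fintype I] [DecidableEq I] [Fintype C] [DecidableEq C]

/-- Patients selected when category `c` with `k` units is processed on the pool `avail`:
the `k` highest-`π_c`-priority eligible patients (all eligible ones if fewer than `k`). -/
def seqTop (pr : C → Option I → ℕ) (c : C) (k : ℕ) (avail : Finset I) : Finset I :=
  (avail.filter (fun i => Elig pr c i)).filter (fun i =>
    ((avail.filter (fun i' => Elig pr c i')).filter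
        (fun j => pr c (some i) < pr c (some j))).card < k)

/-- The sequential reserve matching induced by processing the given list of categories in
order, over the pool `avail` of patients. -/
def seqMatch (pr : C → Option I → ℕ) (r : C → ℕ) : List C → Finset I → I → Option C
  | [], _, _ => none
  | c :: L, avail, i =>
      if i ∈ seqTop pr c (r c) avail then some c
      else seqMatch pr r L (avail \ seqTop pr c (r c) avail) i

/-- Lemma S.2 (two-category swap, unreserved first vs. preferential first): comparing
the sequential reserve matchings over the pool `tI` for the precedence orders `u ▷ c`
and `c ▷' u`, when a category-`c` beneficiary in `tI` is unmatched under the first. -/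
theorem two_category_swap_unreserved
    (π : I → ℕ) (hπ : Function.Injective π)
    (Ben : C → Finset I) (u : C) (hBu : Ben u = univ)
    (pr : C → Option I → ℕ) (hpr : ∀ c, Function.Injective (pr c))
    (hsoft : BaselineSoft π Ben u pr)
    (honce : ∀ (i : I) (c c' : C), c ≠ u → c' ≠ u → i ∈ Ben c → i ∈ Ben c' → c = c')
    (r : C → ℕ) (c : C) (hc : c ≠ u) (tI : Finset I)
    (hunmatched : ∃ i ∈ tI ∩ Ben c, seqMatch pr r [u, c] tI i = none)
    (I2 I2' : Finset I)
    (hI2 : I2 = tI.filter (fun i => seqMatch pr r [u, c] tI i = none))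
    (hI2' : I2' = tI.filter (fun i => seqMatch pr r [c, u] tI i = none)) :
    (I2 \ I2').card = (I2' \ I2).card ∧
    (∀ i ∈ I2' \ I2, i ∈ Ben c) ∧
    (∀ i ∈ I2 \ I2', i ∉ Ben c) ∧
    (∀ i ∈ I2 \ I2', ∀ i' ∈ I2', π i' < π i) ∧
    (∀ i' ∈ I2' \ I2, ∀ i ∈ I2, i ∈ Ben c → π i < π i') := by
  classical
  obtain ⟨hall, hu2, hc3'⟩ := hsoft
  have hc3 := hc3' c hc
  set gπ : I → ℕ := fun i => pr u (some i) with hgπdef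
  set gc : I → ℕ := fun i => pr c (some i) with hgcdef
  have hgπinj : Function.Injective gπ := fun a b h => Option.some.inj (hpr u h)
  have hgcinj : Function.Injective gc := fun a b h => Option.some.inj (hpr c h)
  -- translate `π`-comparisons to `gπ`-comparisons
  have hπg : ∀ i j : I, gπ i < gπ j ↔ π i < π j := fun i j => hu2 j i
  -- seqTop as topSel
  have hseqgen : ∀ (d : C) (k : ℕ) (S : Finset I),
      seqTop pr d k S = TwoCatSwap.topSel (fun i => pr d (some i)) k S := by
    intro d k S
    have h0 : S.filter (fun i => Elig pr d i) = S :=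
      Finset.filter_true_of_mem (fun i _ => hall d i)
    unfold seqTop TwoCatSwap.topSel
    rw [h0]
  have hsequ : ∀ (k : ℕ) (S : Finset I), seqTop pr u k S = TwoCatSwap.topSel gπ k S :=
    fun k S => hseqgen u k S
  have hseqc : ∀ (k : ℕ) (S : Finset I), seqTop pr c k S = TwoCatSwap.topSel gc k S :=
    fun k S => hseqgen c k S
  set A := TwoCatSwap.topSel gπ (r u) tI with hAdef
  set B := TwoCatSwap.topSel gc (r c) (tI \ A) with hBdef
  set A' := TwoCatSwap.topSel gc (r c) tI with hA'def
  set B' := TwoCatSwap.topSel gπ (r u) (tI \ A') with hB'def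
  have hμ : ∀ i : I, seqMatch pr r [u, c] tI i = none ↔ (i ∉ A ∧ i ∉ B) := by
    intro i
    show (if i ∈ seqTop pr u (r u) tI then some u
      else if i ∈ seqTop pr c (r c) (tI \ seqTop pr u (r u) tI)
        then some c else none) = none ↔ _
    rw [hsequ, hseqc, ← hAdef, ← hBdef]
    split_ifs with h1 h2 <;> simp_all
  have hμ' : ∀ i : I, seqMatch pr r [c, u] tI i = none ↔ (i ∉ A' ∧ i ∉ B') := by
    intro i
    show (if i ∈ seqTop pr c (r c) tI then some c
      else if i ∈ seqTop pr u (r u) (tI \ seqTop pr c (r c) tI)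
        then some u else none) = none ↔ _
    rw [hsequ, hseqc, ← hA'def, ← hB'def]
    split_ifs with h1 h2 <;> simp_all
  -- membership descriptions
  have hI2mem : ∀ i : I, i ∈ I2 ↔ i ∈ tI ∧ i ∉ A ∧ i ∉ B := by
    intro i; rw [hI2, Finset.mem_filter, hμ]
  have hI2'mem : ∀ i : I, i ∈ I2' ↔ i ∈ tI ∧ i ∉ A' ∧ i ∉ B' := by
    intro i; rw [hI2', Finset.mem_filter, hμ']
  -- the unmatched beneficiary
  obtain ⟨istar, histar, hisnone⟩ := hunmatched
  rw [Finset.mem_inter] at histar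
  obtain ⟨hisI, hisBen⟩ := histar
  rw [hμ] at hisnone
  obtain ⟨hisA, hisB⟩ := hisnone
  have hisIA : istar ∈ tI \ A := Finset.mem_sdiff.mpr ⟨hisI, hisA⟩
  -- witnesses: many beneficiaries above i* in tI \ A
  have hW : r c ≤ (((tI \ A).filter fun j => gc istar < gc j)).card := by
    by_contra h
    exact hisB (TwoCatSwap.mem_topSel.mpr ⟨hisIA, not_le.mp h⟩)
  -- for a beneficiary i, anyone above it in the c-order is a beneficiary of higher π
  have hrankBen : ∀ (i : I), i ∈ Ben c → ∀ j : I, gc i < gc j → j ∈ Ben c ∧ π i < π j := by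
    intro i hi j hj
    rcases (hc3 j i).mp hj with h | h
    · exact absurd hi h.2
    · exact ⟨h.1.mpr hi, h.2⟩
  -- a non-beneficiary is below every beneficiary in the c-order
  have hnonBen : ∀ (x j : I), x ∉ Ben c → j ∈ Ben c → gc x < gc j := by
    intro x j hx hj
    exact (hc3 j x).mpr (Or.inl ⟨hj, hx⟩)
  -- B consists of beneficiaries
  have hBben : ∀ x ∈ B, x ∈ Ben c := by
    intro x hx
    by_contra hxben
    have hsub : ((tI \ A).filter fun j => gc istar < gc j) ⊆
        ((tI \ A).filter fun j => gc x < gc j) := by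
      intro j hj
      rcases Finset.mem_filter.mp hj with ⟨hjS, hjf⟩
      exact Finset.mem_filter.mpr ⟨hjS, hnonBen x j hxben (hrankBen istar hisBen j hjf).1⟩
    have h1 := le_trans hW (Finset.card_le_card hsub)
    have h2 := (TwoCatSwap.mem_topSel.mp hx).2
    omega
  -- A' consists of beneficiaries
  have hA'ben : ∀ x ∈ A', x ∈ Ben c := by
    intro x hx
    by_contra hxben
    have hsub : ((tI \ A).filter fun j => gc istar < gc j) ⊆
        (tI.filter fun j => gc x < gc j) := by
      intro j hj
      rcases Finset.mem_filter.mp hj with ⟨hjS, hjf⟩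
      exact Finset.mem_filter.mpr ⟨(Finset.mem_sdiff.mp hjS).1,
        hnonBen x j hxben (hrankBen istar hisBen j hjf).1⟩
    have h1 := le_trans hW (Finset.card_le_card hsub)
    have h2 := (TwoCatSwap.mem_topSel.mp hx).2
    omega
  -- part (3): any beneficiary in I2 is also in I2'
  have hBenI2 : ∀ i ∈ I2, i ∈ Ben c → i ∈ I2' := by
    intro i hiI2 hiBen
    rcases (hI2mem i).mp hiI2 with ⟨hiI, hiA, hiB⟩
    have hiIA : i ∈ tI \ A := Finset.mem_sdiff.mpr ⟨hiI, hiA⟩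
    have hWi : r c ≤ (((tI \ A).filter fun j => gc i < gc j)).card := by
      by_contra h
      exact hiB (TwoCatSwap.mem_topSel.mpr ⟨hiIA, not_le.mp h⟩)
    refine (hI2'mem i).mpr ⟨hiI, ?_, ?_⟩
    · -- i ∉ A'
      intro h
      have h2 := (TwoCatSwap.mem_topSel.mp h).2
      have hsub : ((tI \ A).filter fun j => gc i < gc j) ⊆
          (tI.filter fun j => gc i < gc j) :=
        Finset.filter_subset_filter _ (Finset.sdiff_subset)
      have := Finset.card_le_card hsub
      omega
    · -- i ∉ B'
      intro h
      have hcardlt := (TwoCatSwap.mem_topSel.mp h).2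
      set T := tI.filter (fun j => gπ i < gπ j) with hTdef
      have hiTr : r u ≤ T.card := by
        by_contra hcon
        exact hiA (TwoCatSwap.mem_topSel.mpr ⟨hiI, not_le.mp hcon⟩)
      have hAT : A ⊆ T := by
        intro x hx
        have hxlt : gπ i < gπ x := TwoCatSwap.lt_of_mem_topSel hx hiI hiA
        exact Finset.mem_filter.mpr ⟨TwoCatSwap.topSel_subset _ _ _ hx, hxlt⟩
      have hWT : ((tI \ A).filter fun j => gc i < gc j) ⊆ T := by
        intro x hx
        rcases Finset.mem_filter.mp hx with ⟨hxS, hxf⟩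
        have hxπ : π i < π x := (hrankBen i hiBen x hxf).2
        exact Finset.mem_filter.mpr ⟨(Finset.mem_sdiff.mp hxS).1, (hπg i x).mpr hxπ⟩
      have hdisj : Disjoint A ((tI \ A).filter fun j => gc i < gc j) := by
        rw [Finset.disjoint_left]
        intro x hxA hxW
        exact (Finset.mem_sdiff.mp (Finset.mem_filter.mp hxW).1).2 hxA
      have hunion : A.card + (((tI \ A).filter fun j => gc i < gc j)).card ≤ T.card := by
        rw [← Finset.card_union_of_disjoint hdisj]
        exact Finset.card_le_card (Finset.union_subset hAT hWT)
      have hcardA : A.card = min (r u) tI.card := TwoCatSwap.card_topSel hgπinj _ _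
      have hTle : T.card ≤ tI.card := Finset.card_le_card (Finset.filter_subset _ _)
      have hcardA' : A'.card = min (r c) tI.card := TwoCatSwap.card_topSel hgcinj _ _
      have hsd : T.card - A'.card ≤ (T \ A').card := by
        have := Finset.card_sdiff_add_card T A'
        have h2 : T.card ≤ (T ∪ A').card := Finset.card_le_card Finset.subset_union_left
        omega
      have hsub2 : T \ A' ⊆ (tI \ A').filter (fun j => gπ i < gπ j) := by
        intro x hx
        rcases Finset.mem_sdiff.mp hx with ⟨hxT, hxA'⟩
        rcases Finset.mem_filter.mp hxT with ⟨hxI, hxf⟩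
        exact Finset.mem_filter.mpr ⟨Finset.mem_sdiff.mpr ⟨hxI, hxA'⟩, hxf⟩
      have hsub2c := Finset.card_le_card hsub2
      omega
  -- part (2): members of I2' \ I2 are beneficiaries
  have h2ben : ∀ i ∈ I2' \ I2, i ∈ Ben c := by
    intro i hi
    rcases Finset.mem_sdiff.mp hi with ⟨hiI2', hiI2⟩
    rcases (hI2'mem i).mp hiI2' with ⟨hiI, hiA', hiB'⟩
    have hmatched : i ∈ A ∨ i ∈ B := by
      by_contra hcon
      push_neg at hcon
      exact hiI2 ((hI2mem i).mpr ⟨hiI, hcon.1, hcon.2⟩)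
    rcases hmatched with hiA | hiB
    · exfalso
      have hiIA' : i ∈ tI \ A' := Finset.mem_sdiff.mpr ⟨hiI, hiA'⟩
      exact hiB' (TwoCatSwap.mem_topSel_mono (Finset.sdiff_subset) hiA hiIA')
    · exact hBben i hiB
  -- part (3) statement
  have h3 : ∀ i ∈ I2 \ I2', i ∉ Ben c := by
    intro i hi hiBen
    rcases Finset.mem_sdiff.mp hi with ⟨hiI2, hiI2'⟩
    exact hiI2' (hBenI2 i hiI2 hiBen)
  -- part (4)
  have h4 : ∀ i ∈ I2 \ I2', ∀ i' ∈ I2', π i' < π i := by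
    intro i hi i' hi'
    have hiBen : i ∉ Ben c := h3 i hi
    rcases Finset.mem_sdiff.mp hi with ⟨hiI2, hiI2'⟩
    rcases (hI2mem i).mp hiI2 with ⟨hiI, hiA, hiB⟩
    have hmatched : i ∈ A' ∨ i ∈ B' := by
      by_contra hcon
      push_neg at hcon
      exact hiI2' ((hI2'mem i).mpr ⟨hiI, hcon.1, hcon.2⟩)
    have hiB' : i ∈ B' := by
      rcases hmatched with h | h
      · exact absurd (hA'ben i h) hiBen
      · exact h
    rcases (hI2'mem i').mp hi' with ⟨hi'I, hi'A', hi'B'⟩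
    have hi'IA' : i' ∈ tI \ A' := Finset.mem_sdiff.mpr ⟨hi'I, hi'A'⟩
    exact (hπg i' i).mp (TwoCatSwap.lt_of_mem_topSel hiB' hi'IA' hi'B')
  -- part (5)
  have h5 : ∀ i' ∈ I2' \ I2, ∀ i ∈ I2, i ∈ Ben c → π i < π i' := by
    intro i' hi' i hiI2 hiBen
    rcases Finset.mem_sdiff.mp hi' with ⟨hi'I2', hi'I2⟩
    rcases (hI2'mem i').mp hi'I2' with ⟨hi'I, _, _⟩
    have hmatched : i' ∈ A ∨ i' ∈ B := by
      by_contra hcon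
      push_neg at hcon
      exact hi'I2 ((hI2mem i').mpr ⟨hi'I, hcon.1, hcon.2⟩)
    rcases (hI2mem i).mp hiI2 with ⟨hiI, hiA, hiB⟩
    rcases hmatched with h | h
    · exact (hπg i i').mp (TwoCatSwap.lt_of_mem_topSel h hiI hiA)
    · have hiIA : i ∈ tI \ A := Finset.mem_sdiff.mpr ⟨hiI, hiA⟩
      have hlt : gc i < gc i' := TwoCatSwap.lt_of_mem_topSel h hiIA hiB
      exact (hrankBen i hiBen i' hlt).2
  -- part (1): cardinalities
  have h1 : (I2 \ I2').card = (I2' \ I2).card := by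
    have hAsub : A ⊆ tI := TwoCatSwap.topSel_subset _ _ _
    have hBsub : B ⊆ tI \ A := TwoCatSwap.topSel_subset _ _ _
    have hA'sub : A' ⊆ tI := TwoCatSwap.topSel_subset _ _ _
    have hB'sub : B' ⊆ tI \ A' := TwoCatSwap.topSel_subset _ _ _
    have hI2eq : I2 = (tI \ A) \ B := by
      ext i
      rw [hI2mem i, Finset.mem_sdiff, Finset.mem_sdiff]
      tauto
    have hI2'eq : I2' = (tI \ A') \ B' := by
      ext i
      rw [hI2'mem i, Finset.mem_sdiff, Finset.mem_sdiff]
      tauto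
    have hcardA : A.card = min (r u) tI.card := TwoCatSwap.card_topSel hgπinj _ _
    have hcardB : B.card = min (r c) (tI \ A).card := TwoCatSwap.card_topSel hgcinj _ _
    have hcardA' : A'.card = min (r c) tI.card := TwoCatSwap.card_topSel hgcinj _ _
    have hcardB' : B'.card = min (r u) (tI \ A').card := TwoCatSwap.card_topSel hgπinj _ _
    have hsA : (tI \ A).card = tI.card - A.card := Finset.card_sdiff_of_subset hAsub
    have hsA' : (tI \ A').card = tI.card - A'.card := Finset.card_sdiff_of_subset hA'sub
    have hsI2 : I2.card = (tI \ A).card - B.card := by rw [hI2eq, Finset.card_sdiff_of_subset hBsub]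
    have hsI2' : I2'.card = (tI \ A').card - B'.card := by
      rw [hI2'eq, Finset.card_sdiff_of_subset hB'sub]
    have hALe : A.card ≤ tI.card := Finset.card_le_card hAsub
    have hA'Le : A'.card ≤ tI.card := Finset.card_le_card hA'sub
    have hcards : I2.card = I2'.card := by omega
    have e1 := Finset.card_sdiff_add_card_inter I2 I2'
    have e2 := Finset.card_sdiff_add_card_inter I2' I2
    rw [Finset.inter_comm] at e2
    omega
  exact ⟨h1, h2ben, h3, h4, h5⟩



end ReserveSystem
end

section
/- Two-preferential-category swap lemma: let c and c' be distinct preferential treatment categories, I~ ⊆ I, and precedence orders ▷: c' ▷ c and ▷': c ▷' c' over {c, c'}, with μ = φ_▷^{I~}, μ' = φ_{▷'}^{I~}, and suppose μ(I~_c) ⊊ I~_c. Let I(2) = I~ ∖ μ(I~) and I'(2) = I~ ∖ μ'(I~). Then: (1) |I(2) ∖ I'(2)| = |I'(2) ∖ I(2)|; (2) I'(2) ∖ I(2) ⊆ I~_c; (3) I(2) ∖ I'(2) ⊆ I~ ∖ I~_c; (4) if i ∈ I(2) ∖ I'(2) and i' ∈ I'(2) then i π i'; (5) if i' ∈ I'(2)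 ∖ I(2) and i ∈ I(2) ∩ I~_c then i' π i. -/
open Finset

section ReserveSystem

variable {I C : Type*} [Fintype I] [DecidableEq I] [Fintype C] [DecidableEq C]

/-! ### Auxiliary lemmas about top-`k` selections -/

/-- The `k` highest-score elements of `X` (all of `X` if `|X| ≤ k`). -/
def topk (s : I → ℕ) (k : ℕ) (X : Finset I) : Finset I :=
  X.filter (fun i => (X.filter (fun j => s i < s j)).card < k)

lemma mem_topk {s : I → ℕ} {k : ℕ} {X : Finset I} {x : I} :
    x ∈ topk s k X ↔ x ∈ X ∧ (X.filter (fun j => s x < s j)).card < k :=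
  Finset.mem_filter

lemma topk_subset (s : I → ℕ) (k : ℕ) (X : Finset I) : topk s k X ⊆ X :=
  Finset.filter_subset _ _

lemma count_lt_card {s : I → ℕ} {X : Finset I} {x : I} (hx : x ∈ X) :
    (X.filter (fun j => s x < s j)).card < X.card := by
  refine Finset.card_lt_card ?_
  rw [Finset.ssubset_iff_of_subset (Finset.filter_subset _ _)]
  exact ⟨x, hx, by simp⟩

lemma count_lt_count {s : I → ℕ} {X : Finset I} {x y : I}
    (hy : y ∈ X) (hxy : s x < s y) :
    (X.filter (fun j => s y < s j)).card < (X.filter (fun j => s x < s j)).card := by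
  refine Finset.card_lt_card ?_
  rw [Finset.ssubset_iff_of_subset]
  · exact ⟨y, by simp [hy, hxy], by simp⟩
  · intro j hj
    simp only [Finset.mem_filter] at hj ⊢
    exact ⟨hj.1, hxy.trans hj.2⟩

lemma lt_of_topk {s : I → ℕ} (hs : Function.Injective s) {k : ℕ} {X : Finset I} {x y : I}
    (hx : x ∈ topk s k X) (hy : y ∈ X) (hy' : y ∉ topk s k X) : s y < s x := by
  rcases lt_trichotomy (s y) (s x) with h | h | h
  · exact h
  · exact absurd (hs h) (by rintro rfl; exact hy' hx)
  · exfalso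
    rw [mem_topk] at hx
    rw [mem_topk, not_and, not_lt] at hy'
    have h1 := count_lt_count hy h
    have h2 := hy' hy
    omega

lemma topk_mono {s : I → ℕ} {k : ℕ} {X Y : Finset I} (hYX : Y ⊆ X) {x : I}
    (hx : x ∈ topk s k X) (hxY : x ∈ Y) : x ∈ topk s k Y := by
  rw [mem_topk] at hx ⊢
  refine ⟨hxY, lt_of_le_of_lt (Finset.card_le_card ?_) hx.2⟩
  intro j hj
  simp only [Finset.mem_filter] at hj ⊢
  exact ⟨hYX hj.1, hj.2⟩

lemma lt_card_of_not_topk {s : I → ℕ} {k : ℕ} {X : Finset I} {x : I}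
    (hx : x ∈ X) (hx' : x ∉ topk s k X) : k < X.card := by
  rw [mem_topk, not_and, not_lt] at hx'
  exact lt_of_le_of_lt (hx' hx) (count_lt_card hx)

lemma card_topk {s : I → ℕ} (hs : Function.Injective s) {k : ℕ} {X : Finset I}
    (hk : k ≤ X.card) : (topk s k X).card = k := by
  set f : I → ℕ := fun i => (X.filter (fun j => s i < s j)).card with hf
  have hinj : Set.InjOn f X := by
    intro a ha b hb hab
    by_contra hne
    rcases lt_trichotomy (s a) (s b) with h | h | h
    · exact absurd hab (Nat.ne_of_gt (count_lt_count hb h))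
    · exact hne (hs h)
    · exact absurd hab (Nat.ne_of_lt (count_lt_count ha h))
  have himage : X.image f = Finset.range X.card := by
    apply Finset.eq_of_subset_of_card_le
    · intro v hv
      simp only [Finset.mem_image] at hv
      obtain ⟨a, ha, rfl⟩ := hv
      exact Finset.mem_range.mpr (count_lt_card ha)
    · rw [Finset.card_range, Finset.card_image_of_injOn hinj]
  have heq : topk s k X = X.filter (fun i => f i < k) := rfl
  have h2 : (X.filter (fun i => f i < k)).card = ((X.image f).filter (fun v => v < k)).card := by
    rw [← Finset.card_image_of_injOn (hinj.mono (Finset.filter_subset _ _))]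
    congr 1
    ext v
    simp only [Finset.mem_image, Finset.mem_filter]
    constructor
    · rintro ⟨a, ⟨ha, hak⟩, rfl⟩; exact ⟨⟨a, ha, rfl⟩, hak⟩
    · rintro ⟨⟨a, ha, rfl⟩, hak⟩; exact ⟨a, ⟨ha, hak⟩, rfl⟩
  have h3 : (Finset.range X.card).filter (fun v => v < k) = Finset.range k := by
    ext v
    simp only [Finset.mem_filter, Finset.mem_range]
    omega
  rw [heq, h2, himage, h3, Finset.card_range]

lemma topk_subset_ben {s : I → ℕ} (hs : Function.Injective s) {k : ℕ} {X B : Finset I}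
    (hpref : ∀ i j, i ∈ B → j ∉ B → s j < s i)
    {x : I} (hx : x ∈ X) (hxB : x ∈ B) (hx' : x ∉ topk s k X) :
    topk s k X ⊆ B := by
  intro y hy
  by_contra hyB
  have h1 := lt_of_topk hs hy hx hx'
  have h2 := hpref x y hxB hyB
  omega

lemma seqTop_eq_topk (pr : C → Option I → ℕ) (c : C) (k : ℕ) (avail : Finset I)
    (helig : ∀ i, pr c none < pr c (some i)) :
    seqTop pr c k avail = topk (fun i => pr c (some i)) k avail := by
  have h : avail.filter (fun i => Elig pr c i) = avail :=
    Finset.filter_true_of_mem (fun i _ => helig i)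
  unfold seqTop topk
  rw [h]

/-- Lemma S.3 (two-preferential-category swap): comparing the sequential reserve
matchings over the pool `tI` for the precedence orders `c' ▷ c` and `c ▷' c'`, where `c`
and `c'` are distinct preferential treatment categories and some category-`c`
beneficiary in `tI` is unmatched under the first. -/
theorem two_category_swap_preferential
    (π : I → ℕ) (hπ : Function.Injective π)
    (Ben : C → Finset I) (u : C) (hBu : Ben u = univ)
    (pr : C → Option I → ℕ) (hpr : ∀ c, Function.Injective (pr c))
    (hsoft : BaselineSoft π Ben u pr)
    (honce : ∀ (i : I) (c c' : C), c ≠ u → c' ≠ u → i ∈ Ben c → i ∈ Ben c' → c = c')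
    (r : C → ℕ) (c c' : C) (hc : c ≠ u) (hc' : c' ≠ u) (hcc' : c ≠ c') (tI : Finset I)
    (hunmatched : ∃ i ∈ tI ∩ Ben c, seqMatch pr r [c', c] tI i = none)
    (I2 I2' : Finset I)
    (hI2 : I2 = tI.filter (fun i => seqMatch pr r [c', c] tI i = none))
    (hI2' : I2' = tI.filter (fun i => seqMatch pr r [c, c'] tI i = none)) :
    (I2 \ I2').card = (I2' \ I2).card ∧
    (∀ i ∈ I2' \ I2, i ∈ Ben c) ∧
    (∀ i ∈ I2 \ I2', i ∉ Ben c) ∧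
    (∀ i ∈ I2 \ I2', ∀ i' ∈ I2', π i' < π i) ∧
    (∀ i' ∈ I2' \ I2, ∀ i ∈ I2, i ∈ Ben c → π i < π i') := by
  classical
  -- Score functions
  set s : I → ℕ := fun i => pr c (some i) with hsdef
  set s' : I → ℕ := fun i => pr c' (some i) with hs'def
  have hs : Function.Injective s := fun a b h => Option.some.inj (hpr c h)
  have hs' : Function.Injective s' := fun a b h => Option.some.inj (hpr c' h)
  -- Priority rules
  have hrule_c : ∀ i j : I, s j < s i ↔
      ((i ∈ Ben c ∧ j ∉ Ben c) ∨ ((i ∈ Ben c ↔ j ∈ Ben c) ∧ π j < π i)) :=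
    hsoft.2.2 c hc
  have hrule_c' : ∀ i j : I, s' j < s' i ↔
      ((i ∈ Ben c' ∧ j ∉ Ben c') ∨ ((i ∈ Ben c' ↔ j ∈ Ben c') ∧ π j < π i)) :=
    hsoft.2.2 c' hc'
  have hdisjBen : ∀ i : I, i ∈ Ben c → i ∉ Ben c' :=
    fun i h h' => hcc' (honce i c c' hc hc' h h')
  have helig : ∀ (d : C) (i : I), pr d none < pr d (some i) := hsoft.1
  -- The four selection sets
  set S1' : Finset I := topk s' (r c') tI with hS1'
  set S1 : Finset I := topk s (r c) (tI \ S1') with hS1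
  set S2 : Finset I := topk s (r c) tI with hS2
  set S2' : Finset I := topk s' (r c') (tI \ S2) with hS2'
  have hst1 : seqTop pr c' (r c') tI = S1' := seqTop_eq_topk pr c' (r c') tI (helig c')
  have hst2 : seqTop pr c (r c) (tI \ S1') = S1 := seqTop_eq_topk pr c (r c) _ (helig c)
  have hst3 : seqTop pr c (r c) tI = S2 := seqTop_eq_topk pr c (r c) tI (helig c)
  have hst4 : seqTop pr c' (r c') (tI \ S2) = S2' := seqTop_eq_topk pr c' (r c') _ (helig c')
  -- Matching characterizations
  have hμ : ∀ i : I, seqMatch pr r [c', c] tI i = none ↔ (i ∉ S1' ∧ i ∉ S1) := by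
    intro i
    show (if i ∈ seqTop pr c' (r c') tI then some c'
      else if i ∈ seqTop pr c (r c) (tI \ seqTop pr c' (r c') tI) then some c
      else seqMatch pr r [] _ i) = none ↔ _
    rw [hst1]
    by_cases h1 : i ∈ S1'
    · simp [h1]
    · simp only [h1, if_false]
      rw [hst2]
      by_cases h2 : i ∈ S1 <;> simp [h1, h2, seqMatch]
  have hμ' : ∀ i : I, seqMatch pr r [c, c'] tI i = none ↔ (i ∉ S2 ∧ i ∉ S2') := by
    intro i
    show (if i ∈ seqTop pr c (r c) tI then some c
      else if i ∈ seqTop pr c' (r c') (tI \ seqTop pr c (r c) tI) then some c'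
      else seqMatch pr r [] _ i) = none ↔ _
    rw [hst3]
    by_cases h1 : i ∈ S2
    · simp [h1]
    · simp only [h1, if_false]
      rw [hst4]
      by_cases h2 : i ∈ S2' <;> simp [h1, h2, seqMatch]
  have hmemI2 : ∀ i : I, i ∈ I2 ↔ (i ∈ tI ∧ i ∉ S1' ∧ i ∉ S1) := by
    intro i; rw [hI2, Finset.mem_filter, hμ i]
  have hmemI2' : ∀ i : I, i ∈ I2' ↔ (i ∈ tI ∧ i ∉ S2 ∧ i ∉ S2') := by
    intro i; rw [hI2', Finset.mem_filter, hμ' i]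
  -- the unmatched beneficiary
  obtain ⟨i₀, hi₀, hi₀m⟩ := hunmatched
  rw [Finset.mem_inter] at hi₀
  obtain ⟨hi₀tI, hi₀B⟩ := hi₀
  rw [hμ i₀] at hi₀m
  obtain ⟨hi₀1, hi₀2⟩ := hi₀m
  have hi₀pool : i₀ ∈ tI \ S1' := Finset.mem_sdiff.mpr ⟨hi₀tI, hi₀1⟩
  -- i₀ is not in S2 either
  have hi₀S2 : i₀ ∉ S2 := by
    intro h
    exact hi₀2 (topk_mono (Finset.sdiff_subset) h hi₀pool)
  have hi₀pool2 : i₀ ∈ tI \ S2 := Finset.mem_sdiff.mpr ⟨hi₀tI, hi₀S2⟩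
  -- cardinalities
  have hcardS1' : S1'.card = r c' :=
    card_topk hs' (le_of_lt (lt_card_of_not_topk hi₀tI hi₀1))
  have hcardS1 : S1.card = r c :=
    card_topk hs (le_of_lt (lt_card_of_not_topk hi₀pool hi₀2))
  have hpoolbig : r c < (tI \ S1').card := lt_card_of_not_topk hi₀pool hi₀2
  have hcardS2 : S2.card = r c := by
    refine card_topk hs (le_trans (le_of_lt hpoolbig) ?_)
    exact Finset.card_le_card (Finset.sdiff_subset)
  have hS1sub : S1 ⊆ tI \ S1' := topk_subset _ _ _
  have hS1tI : S1 ⊆ tI := hS1sub.trans (Finset.sdiff_subset)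
  have hS1'tI : S1' ⊆ tI := topk_subset _ _ _
  have hS2tI : S2 ⊆ tI := topk_subset _ _ _
  have hS2'sub : S2' ⊆ tI \ S2 := topk_subset _ _ _
  have hS2'tI : S2' ⊆ tI := hS2'sub.trans (Finset.sdiff_subset)
  have hcardS2' : S2'.card = r c' := by
    refine card_topk hs' ?_
    have h1 : (tI \ S2).card = tI.card - S2.card := Finset.card_sdiff_of_subset hS2tI
    have h2 : (tI \ S1').card ≤ tI.card - S1'.card := by
      rw [Finset.card_sdiff_of_subset hS1'tI]
    have h3 : S1'.card ≤ tI.card := Finset.card_le_card hS1'tI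
    have h4 : S2.card ≤ tI.card := Finset.card_le_card hS2tI
    omega
  -- selected beneficiary structure
  have hprefc : ∀ i j : I, i ∈ Ben c → j ∉ Ben c → s j < s i := by
    intro i j hi hj
    exact (hrule_c i j).mpr (Or.inl ⟨hi, hj⟩)
  have hS1Ben : S1 ⊆ Ben c :=
    topk_subset_ben hs hprefc hi₀pool hi₀B hi₀2
  have hS2Ben : S2 ⊆ Ben c :=
    topk_subset_ben hs hprefc hi₀tI hi₀B hi₀S2
  -- S1' ⊆ S2 ∪ S2' and S2 ⊆ S1' ∪ S1
  have hS1'M2 : ∀ x ∈ S1', x ∈ S2 ∨ x ∈ S2' := by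
    intro x hx
    by_cases h : x ∈ S2
    · exact Or.inl h
    · refine Or.inr (topk_mono (Finset.sdiff_subset) hx ?_)
      exact Finset.mem_sdiff.mpr ⟨hS1'tI hx, h⟩
  have hS2M1 : ∀ x ∈ S2, x ∈ S1' ∨ x ∈ S1 := by
    intro x hx
    by_cases h : x ∈ S1'
    · exact Or.inl h
    · refine Or.inr (topk_mono (Finset.sdiff_subset) hx ?_)
      exact Finset.mem_sdiff.mpr ⟨hS2tI hx, h⟩
  -- Key lemma: beneficiaries of c selected in S2' are matched under the first order
  have hKey : ∀ x ∈ S2', x ∈ Ben c → x ∈ S1' ∨ x ∈ S1 := by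
    intro x hxS2' hxB
    by_contra hxM
    push_neg at hxM
    obtain ⟨hx1, hx2⟩ := hxM
    have hxtI2 : x ∈ tI \ S2 := hS2'sub hxS2'
    have hxtI : x ∈ tI := (Finset.mem_sdiff.mp hxtI2).1
    have hxS2 : x ∉ S2 := (Finset.mem_sdiff.mp hxtI2).2
    have hxpool : x ∈ tI \ S1' := Finset.mem_sdiff.mpr ⟨hxtI, hx1⟩
    set A : Finset I := (tI \ S2).filter (fun j => s' x < s' j) with hA
    set B : Finset I := (tI \ S1').filter (fun j => s x < s j) with hB
    have hAcard : A.card < r c' := (mem_topk.mp hxS2').2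
    have hBcard : r c ≤ B.card := by
      have := (mem_topk (s := s) (k := r c) (X := tI \ S1') (x := x)).not.mp hx2
      rw [not_and, not_lt] at this
      exact this hxpool
    have hS1'A : S1' \ S2 ⊆ A := by
      intro j hj
      rw [Finset.mem_sdiff] at hj
      refine Finset.mem_filter.mpr ⟨Finset.mem_sdiff.mpr ⟨hS1'tI hj.1, hj.2⟩, ?_⟩
      exact lt_of_topk hs' hj.1 hxtI hx1
    have hBA : B \ S2 ⊆ A := by
      intro w hw
      rw [Finset.mem_sdiff] at hw
      obtain ⟨hwB, hwS2⟩ := hw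
      rw [Finset.mem_filter, Finset.mem_sdiff] at hwB
      obtain ⟨⟨hwtI, hwS1'⟩, hws⟩ := hwB
      refine Finset.mem_filter.mpr ⟨Finset.mem_sdiff.mpr ⟨hwtI, hwS2⟩, ?_⟩
      by_cases hwBc' : w ∈ Ben c'
      · exact (hrule_c' w x).mpr (Or.inl ⟨hwBc', hdisjBen x hxB⟩)
      · rcases (hrule_c w x).mp hws with ⟨_, hxnB⟩ | ⟨_, hπ⟩
        · exact absurd hxB hxnB
        · exact (hrule_c' w x).mpr (Or.inr ⟨by simp [hwBc', hdisjBen x hxB], hπ⟩)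
    have hdisjSB : Disjoint (S1' \ S2) (B \ S2) := by
      rw [Finset.disjoint_left]
      intro a ha hab
      have h1 : a ∈ S1' := (Finset.mem_sdiff.mp ha).1
      have h2 : a ∈ B := (Finset.mem_sdiff.mp hab).1
      exact (Finset.mem_sdiff.mp (Finset.mem_filter.mp h2).1).2 h1
    have h1 : (S1' \ S2).card + (S1' ∩ S2).card = S1'.card :=
      Finset.card_sdiff_add_card_inter _ _
    have h2 : (B \ S2).card + (B ∩ S2).card = B.card :=
      Finset.card_sdiff_add_card_inter _ _
    have hdisj2 : Disjoint (S1' ∩ S2) (B ∩ S2) := by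
      rw [Finset.disjoint_left]
      intro a ha hab
      have h1 : a ∈ S1' := (Finset.mem_inter.mp ha).1
      have h2 : a ∈ B := (Finset.mem_inter.mp hab).1
      exact (Finset.mem_sdiff.mp (Finset.mem_filter.mp h2).1).2 h1
    have h3 : (S1' ∩ S2).card + (B ∩ S2).card ≤ S2.card := by
      rw [← Finset.card_union_of_disjoint hdisj2]
      exact Finset.card_le_card
        (Finset.union_subset Finset.inter_subset_right Finset.inter_subset_right)
    have h4 : (S1' \ S2).card + (B \ S2).card ≤ A.card := by
      rw [← Finset.card_union_of_disjoint hdisjSB]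
      exact Finset.card_le_card (Finset.union_subset hS1'A hBA)
    omega
  -- members of S2' not in S1' are not beneficiaries of c'
  have hS2'nB : ∀ x ∈ S2', x ∉ S1' → x ∉ Ben c' := by
    intro x hxS2' hx1 hxB'
    have hxtI : x ∈ tI := hS2'tI hxS2'
    have hC : r c' ≤ (tI.filter (fun j => s' x < s' j)).card := by
      have := (mem_topk (s := s') (k := r c') (X := tI) (x := x)).not.mp hx1
      rw [not_and, not_lt] at this
      exact this hxtI
    have hsub : tI.filter (fun j => s' x < s' j) ⊆ (tI \ S2).filter (fun j => s' x < s' j) := by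
      intro j hj
      rw [Finset.mem_filter] at hj
      refine Finset.mem_filter.mpr ⟨Finset.mem_sdiff.mpr ⟨hj.1, ?_⟩, hj.2⟩
      intro hjS2
      rcases (hrule_c' j x).mp hj.2 with ⟨_, hxnB⟩ | ⟨hiff, _⟩
      · exact hxnB hxB'
      · exact hdisjBen j (hS2Ben hjS2) (hiff.mpr hxB')
    have hAcard : ((tI \ S2).filter (fun j => s' x < s' j)).card < r c' :=
      (mem_topk.mp hxS2').2
    have := Finset.card_le_card hsub
    omega
  -- cardinality of the unmatched sets
  have hdisjS1 : Disjoint S1' S1 := by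
    rw [Finset.disjoint_left]
    exact fun a ha ha' => (Finset.mem_sdiff.mp (hS1sub ha')).2 ha
  have hdisjS2 : Disjoint S2 S2' := by
    rw [Finset.disjoint_left]
    exact fun a ha ha' => absurd ha (Finset.mem_sdiff.mp (hS2'sub ha')).2
  have hI2eq : I2 = tI \ (S1' ∪ S1) := by
    ext i
    rw [hmemI2 i, Finset.mem_sdiff, Finset.mem_union]
    tauto
  have hI2'eq : I2' = tI \ (S2 ∪ S2') := by
    ext i
    rw [hmemI2' i, Finset.mem_sdiff, Finset.mem_union]
    tauto
  have hcardI2 : I2.card = I2'.card := by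
    rw [hI2eq, hI2'eq, Finset.card_sdiff_of_subset, Finset.card_sdiff_of_subset,
      Finset.card_union_of_disjoint hdisjS1, Finset.card_union_of_disjoint hdisjS2,
      hcardS1', hcardS1, hcardS2, hcardS2']
    · omega
    · exact Finset.union_subset hS2tI hS2'tI
    · exact Finset.union_subset hS1'tI hS1tI
  refine ⟨Finset.card_sdiff_comm hcardI2, ?_, ?_, ?_, ?_⟩
  · -- (2) I2' \ I2 ⊆ Ben c
    intro i hi
    rw [Finset.mem_sdiff, hmemI2' i, hmemI2 i] at hi
    obtain ⟨⟨hitI, hiS2, hiS2'⟩, hiM⟩ := hi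
    push_neg at hiM
    rcases Decidable.em (i ∈ S1') with h1 | h1
    · rcases hS1'M2 i h1 with h | h
      · exact absurd h hiS2
      · exact absurd h hiS2'
    · exact hS1Ben (hiM hitI h1)
  · -- (3) I2 \ I2' ∩ Ben c = ∅
    intro i hi hiB
    rw [Finset.mem_sdiff, hmemI2 i, hmemI2' i] at hi
    obtain ⟨⟨hitI, hiS1', hiS1⟩, hiM⟩ := hi
    push_neg at hiM
    have hiS2' : i ∈ S2' := by
      rcases Decidable.em (i ∈ S2) with h | h
      · rcases hS2M1 i h with h' | h'
        · exact absurd h' hiS1'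
        · exact absurd h' hiS1
      · exact hiM hitI h
    rcases hKey i hiS2' hiB with h | h
    · exact hiS1' h
    · exact hiS1 h
  · -- (4)
    intro i hi i' hi'
    rw [Finset.mem_sdiff, hmemI2 i, hmemI2' i] at hi
    obtain ⟨⟨hitI, hiS1', hiS1⟩, hiM⟩ := hi
    push_neg at hiM
    have hiS2' : i ∈ S2' := by
      rcases Decidable.em (i ∈ S2) with h | h
      · rcases hS2M1 i h with h' | h'
        · exact absurd h' hiS1'
        · exact absurd h' hiS1
      · exact hiM hitI h
    rw [hmemI2' i'] at hi'
    obtain ⟨hi'tI, hi'S2, hi'S2'⟩ := hi'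
    have hlt : s' i' < s' i :=
      lt_of_topk hs' hiS2' (Finset.mem_sdiff.mpr ⟨hi'tI, hi'S2⟩) hi'S2'
    rcases (hrule_c' i i').mp hlt with ⟨hiBc', _⟩ | ⟨_, hπ⟩
    · exact absurd hiBc' (hS2'nB i hiS2' hiS1')
    · exact hπ
  · -- (5)
    intro i' hi' i hi hiB
    rw [Finset.mem_sdiff, hmemI2' i', hmemI2 i'] at hi'
    obtain ⟨⟨hi'tI, hi'S2, hi'S2'⟩, hi'M⟩ := hi'
    push_neg at hi'M
    have hi'S1 : i' ∈ S1 := by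
      rcases Decidable.em (i' ∈ S1') with h | h
      · rcases hS1'M2 i' h with h' | h'
        · exact absurd h' hi'S2
        · exact absurd h' hi'S2'
      · exact hi'M hi'tI h
    rw [hmemI2 i] at hi
    obtain ⟨hitI, hiS1', hiS1⟩ := hi
    have hlt : s i < s i' :=
      lt_of_topk hs hi'S1 (Finset.mem_sdiff.mpr ⟨hitI, hiS1'⟩) hiS1
    rcases (hrule_c i' i).mp hlt with ⟨_, hinB⟩ | ⟨_, hπ⟩
    · exact absurd hiB hinB
    · exact hπ

end ReserveSystem
end
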